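/- arXiv:1502.03056 — 4 statements merged into one kernel-verified Lean document; each statement's English description precedes it below -/
import Mathlib

section
/- Let a and b be positive integers with (a,b) ≠ (1,1) and (a,b) ≠ (2,1), and let f(z) = c·z(z-1)/2 + d·z where c and d are positive integers with d not dividing c. If the sum a·T_x + b·y² + f(z) is universal over ℕ, then it is one of the following 18 sums: T_x+2y²+z(z+3)/2; T_x+2y²+z(z+5)/2; T_x+2y²+z(z+7)/2; T_x+2y²+z(z+3); T_x+2y²+z(3z+1); T_x+2y²+z(3z+1)/2; T_x+2y²+z(3z+5)/2; T_x+2y²+z(5z−1)/2; T_x+2y²+z(7z−3)/2; T_x+2y²+z(9z−5)/2; T_x+2y²+z(9z−1)/2; T_x+3y²+z(3z+1)/2; T_x+4y²+z(z+3)/2; T_x+4y²+z(3z+1)/2; 3T_x+y²+z(z+3)/2; 3T_x+y²+z(3z+1)/2; 4T_x+y²+z(z+3)/2; 6T_x+y²+z(z+3)/2. -/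
/-!
Escalation. Since `d ∤ c` forces `d ≥ 2`, representing `n = 1` forces `a = 1` or `b = 1`, and the
representations of the next few small `n` pin down `b` and `d` (and, for `b = 1`, bound `a`).
A larger `n` then leaves finitely many candidates for `c`, and every candidate outside the list
fails to represent some specific small `n`. All representations of a given `n` lie in an explicit
box of `(x, y, z)`, so each step is a finite check.
-/

def triZ (n : ℕ) : ℤ := (n : ℤ) * ((n : ℤ) + 1) / 2

def polF (c d z : ℕ) : ℤ := (c : ℤ) * ((z : ℤ) * ((z : ℤ) - 1)) / 2 + (d : ℤ) * (z : ℤ)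

/-- `a T_x + b y² + (c z(z-1)/2 + d z) = n` for some `x y z : ℕ`, with denominators cleared. -/
def Represents (a b c d n : ℕ) : Prop :=
  ∃ x y z : ℕ, a * (x * (x + 1)) + 2 * (b * y ^ 2) + c * (z * (z - 1)) + 2 * (d * z) = 2 * n

def Universal (a b c d : ℕ) : Prop := ∀ n, Represents a b c d n

theorem two_mul_triZ (x : ℕ) : 2 * triZ x = x * (x + 1) :=
  Int.two_mul_ediv_two_of_even (Int.even_mul_succ_self x)

theorem two_mul_polF (c d z : ℕ) : 2 * polF c d z = c * (z * (z - 1)) + 2 * (d * z) := by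
  have h : Even ((c : ℤ) * (z * (z - 1))) := by
    simpa [mul_comm] using (Int.even_mul_pred_self z).mul_left (c : ℤ)
  rw [polF, mul_add, Int.two_mul_ediv_two_of_even h]

theorem represents_of_eq {a b c d n x y z : ℕ}
    (h : (n : ℤ) = a * triZ x + b * y ^ 2 + polF c d z) : Represents a b c d n := by
  refine ⟨x, y, z, ?_⟩
  have key :
      (a * (x * (x + 1)) + 2 * (b * y ^ 2) + c * (z * (z - 1)) + 2 * (d * z) : ℤ) = 2 * n := by
    linear_combination -2 * h - a * two_mul_triZ x - two_mul_polF c d z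
  have hcast : ((z * (z - 1) : ℕ) : ℤ) = z * (z - 1) := by rcases z with _ | z <;> simp
  rw [← hcast] at key
  exact_mod_cast key

section

variable {a b c d n X Y Z : ℕ}

theorem Represents.exists_le (h : Represents a b c d n) (hX : 2 * n < a * ((X + 1) * (X + 2)))
    (hY : n < b * (Y + 1) ^ 2) (hZ : 2 * n < c * ((Z + 1) * Z) ∨ n < d * (Z + 1)) :
    ∃ x ≤ X, ∃ y ≤ Y, ∃ z ≤ Z,
      a * (x * (x + 1)) + 2 * (b * y ^ 2) + c * (z * (z - 1)) + 2 * (d * z) = 2 * n := by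
  obtain ⟨x, y, z, h⟩ := h
  refine ⟨x, ?_, y, ?_, z, ?_, h⟩ <;> by_contra! hlt
  · have : a * ((X + 1) * (X + 2)) ≤ a * (x * (x + 1)) :=
      Nat.mul_le_mul_left a (Nat.mul_le_mul (by omega) (by omega))
    omega
  · have : b * (Y + 1) ^ 2 ≤ b * y ^ 2 := by gcongr; omega
    omega
  · have : c * ((Z + 1) * Z) ≤ c * (z * (z - 1)) :=
      Nat.mul_le_mul_left c (Nat.mul_le_mul (by omega) (by omega))
    have : d * (Z + 1) ≤ d * z := by gcongr; omega
    omega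

theorem not_represents_of_forall_le (hX : 2 * n < a * ((X + 1) * (X + 2)))
    (hY : n < b * (Y + 1) ^ 2) (hZ : 2 * n < c * ((Z + 1) * Z) ∨ n < d * (Z + 1))
    (H : ∀ x ≤ X, ∀ y ≤ Y, ∀ z ≤ Z,
      a * (x * (x + 1)) + 2 * (b * y ^ 2) + c * (z * (z - 1)) + 2 * (d * z) ≠ 2 * n) :
    ¬ Represents a b c d n := fun h =>
  let ⟨x, hx, y, hy, z, hz, h⟩ := h.exists_le hX hY hZ
  H x hx y hy z hz h

end

/-- The coefficient tuples `(a, b, c, d)` of the eighteen sums in the list. -/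
def universalCoeffs : Finset (ℕ × ℕ × ℕ × ℕ) :=
  {(1, 2, 1, 2), (1, 2, 1, 3), (1, 2, 1, 4), (1, 2, 2, 4), (1, 2, 6, 4), (1, 2, 3, 2),
    (1, 2, 3, 4), (1, 2, 5, 2), (1, 2, 7, 2), (1, 2, 9, 2), (1, 2, 9, 4), (1, 3, 3, 2),
    (1, 4, 1, 2), (1, 4, 3, 2), (3, 1, 1, 2), (3, 1, 3, 2), (4, 1, 1, 2), (6, 1, 1, 2)}

theorem not_universal_five_one_c_two {c : ℕ} (hdc : ¬ 2 ∣ c) : ¬ Universal 5 1 c 2 := by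
  intro hU
  have : c = 1 ∨ c = 5 := by
    obtain ⟨x, hx, y, hy, z, hz, h⟩ :=
      (hU 10).exists_le (X := 1) (Y := 3) (Z := 5) (by omega) (by omega) (by omega)
    interval_cases x <;> interval_cases y <;> interval_cases z <;> omega
  rcases this with rfl | rfl <;>
    exact absurd (hU 12) (not_represents_of_forall_le (X := 1) (Y := 3) (Z := 5)
      (by decide) (by decide) (by decide) (by decide))

namespace Universal

variable {a b c d : ℕ}

theorem mem_universalCoeffs_one_two_c_two (hU : Universal 1 2 c 2) (hdc : ¬ 2 ∣ c) :
    (1, 2, c, 2) ∈ universalCoeffs := by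
  have : c = 1 ∨ c = 3 ∨ c = 5 ∨ c = 7 ∨ c = 9 ∨ c = 11 ∨ c = 13 ∨ c = 15 ∨ c = 17 ∨ c = 21 ∨
      c = 23 := by
    obtain ⟨x, hx, y, hy, z, hz, h⟩ :=
      (hU 27).exists_le (X := 6) (Y := 3) (Z := 7) (by omega) (by omega) (by omega)
    interval_cases x <;> interval_cases y <;> interval_cases z <;> omega
  rcases this with rfl | rfl | rfl | rfl | rfl | rfl | rfl | rfl | rfl | rfl | rfl
  all_goals first
    | decide
    | exact absurd (hU 22) (not_represents_of_forall_le (X := 6) (Y := 3) (Z := 2)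
        (by decide) (by decide) (by decide) (by decide))
    | exact absurd (hU 43) (not_represents_of_forall_le (X := 8) (Y := 4) (Z := 3)
        (by decide) (by decide) (by decide) (by decide))
    | exact absurd (hU 419) (not_represents_of_forall_le (X := 28) (Y := 14) (Z := 7)
        (by decide) (by decide) (by decide) (by decide))

theorem mem_universalCoeffs_one_two_c_four (hU : Universal 1 2 c 4) (hdc : ¬ 4 ∣ c) :
    (1, 2, c, 4) ∈ universalCoeffs := by
  have : c = 1 ∨ c = 2 ∨ c = 3 ∨ c = 6 ∨ c = 7 ∨ c = 9 ∨ c = 10 ∨ c = 13 ∨ c = 15 ∨ c = 17 ∨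
      c = 18 := by
    obtain ⟨x, hx, y, hy, z, hz, h⟩ :=
      (hU 26).exists_le (X := 6) (Y := 3) (Z := 6) (by omega) (by omega) (by omega)
    interval_cases x <;> interval_cases y <;> interval_cases z <;> omega
  rcases this with rfl | rfl | rfl | rfl | rfl | rfl | rfl | rfl | rfl | rfl | rfl
  all_goals first
    | decide
    | exact absurd (hU 20) (not_represents_of_forall_le (X := 5) (Y := 3) (Z := 2)
        (by decide) (by decide) (by decide) (by decide))
    | exact absurd (hU 31) (not_represents_of_forall_le (X := 7) (Y := 3) (Z := 3)
        (by decide) (by decide) (by decide) (by decide))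

theorem mem_universalCoeffs_one_four_c_two (hU : Universal 1 4 c 2) (hdc : ¬ 2 ∣ c) :
    (1, 4, c, 2) ∈ universalCoeffs := by
  have : c = 1 ∨ c = 3 ∨ c = 7 := by
    obtain ⟨x, hx, y, hy, z, hz, h⟩ :=
      (hU 11).exists_le (X := 4) (Y := 1) (Z := 5) (by omega) (by omega) (by omega)
    interval_cases x <;> interval_cases y <;> interval_cases z <;> omega
  rcases this with rfl | rfl | rfl
  all_goals first
    | decide
    | exact absurd (hU 13) (not_represents_of_forall_le (X := 4) (Y := 1) (Z := 2)
        (by decide) (by decide) (by decide) (by decide))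

theorem mem_universalCoeffs_of_a_eq_one (hU : Universal 1 b c d) (hb : 2 ≤ b) (hd : 2 ≤ d)
    (hdc : ¬ d ∣ c) : (1, b, c, d) ∈ universalCoeffs := by
  have : b = 2 ∨ d = 2 := by
    obtain ⟨x, hx, y, hy, z, hz, h⟩ :=
      (hU 2).exists_le (X := 1) (Y := 1) (Z := 1) (by omega) (by omega) (by omega)
    interval_cases x <;> interval_cases y <;> interval_cases z <;> omega
  rcases this with rfl | rfl
  · have : d = 2 ∨ d = 3 ∨ d = 4 := by
      obtain ⟨x, hx, y, hy, z, hz, h⟩ :=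
        (hU 4).exists_le (X := 2) (Y := 1) (Z := 2) (by omega) (by omega) (by omega)
      interval_cases x <;> interval_cases y <;> interval_cases z <;> omega
    rcases this with rfl | rfl | rfl
    · exact hU.mem_universalCoeffs_one_two_c_two hdc
    · obtain rfl : c = 1 := by
        obtain ⟨x, hx, y, hy, z, hz, h⟩ :=
          (hU 7).exists_le (X := 3) (Y := 1) (Z := 2) (by omega) (by omega) (by omega)
        interval_cases x <;> interval_cases y <;> interval_cases z <;> omega
      decide
    · exact hU.mem_universalCoeffs_one_two_c_four hdc
  · have : b = 2 ∨ b = 3 ∨ b = 4 := by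
      obtain ⟨x, hx, y, hy, z, hz, h⟩ :=
        (hU 4).exists_le (X := 2) (Y := 1) (Z := 2) (by omega) (by omega) (by omega)
      interval_cases x <;> interval_cases y <;> interval_cases z <;> omega
    rcases this with rfl | rfl | rfl
    · exact hU.mem_universalCoeffs_one_two_c_two hdc
    · obtain rfl : c = 3 := by
        obtain ⟨x, hx, y, hy, z, hz, h⟩ :=
          (hU 7).exists_le (X := 3) (Y := 1) (Z := 3) (by omega) (by omega) (by omega)
        interval_cases x <;> interval_cases y <;> interval_cases z <;> omega
      decide
    · exact hU.mem_universalCoeffs_one_four_c_two hdc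

theorem mem_universalCoeffs_three_one_c_two (hU : Universal 3 1 c 2) (hdc : ¬ 2 ∣ c) :
    (3, 1, c, 2) ∈ universalCoeffs := by
  have : c = 1 ∨ c = 3 := by
    obtain ⟨x, hx, y, hy, z, hz, h⟩ :=
      (hU 8).exists_le (X := 1) (Y := 2) (Z := 4) (by omega) (by omega) (by omega)
    interval_cases x <;> interval_cases y <;> interval_cases z <;> omega
  rcases this with rfl | rfl <;> decide

theorem mem_universalCoeffs_four_one_c_two (hU : Universal 4 1 c 2) (hdc : ¬ 2 ∣ c) :
    (4, 1, c, 2) ∈ universalCoeffs := by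
  have : c = 1 ∨ c = 3 ∨ c = 7 ∨ c = 15 ∨ c = 19 ∨ c = 23 ∨ c = 27 := by
    obtain ⟨x, hx, y, hy, z, hz, h⟩ :=
      (hU 32).exists_le (X := 3) (Y := 5) (Z := 8) (by omega) (by omega) (by omega)
    interval_cases x <;> interval_cases y <;> interval_cases z <;> omega
  rcases this with rfl | rfl | rfl | rfl | rfl | rfl | rfl
  all_goals first
    | decide
    | exact absurd (hU 17) (not_represents_of_forall_le (X := 2) (Y := 4) (Z := 3)
        (by decide) (by decide) (by decide) (by decide))

theorem mem_universalCoeffs_a_one_one_two (hU : Universal a 1 1 2) (ha : 3 ≤ a) :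
    (a, 1, 1, 2) ∈ universalCoeffs := by
  have : a = 3 ∨ a = 4 ∨ a = 5 ∨ a = 6 ∨ a = 7 := by
    obtain ⟨x, hx, y, hy, z, hz, h⟩ :=
      (hU 7).exists_le (X := 1) (Y := 2) (Z := 4) (by omega) (by omega) (by omega)
    interval_cases x <;> interval_cases y <;> interval_cases z <;> omega
  rcases this with rfl | rfl | rfl | rfl | rfl
  all_goals first
    | decide
    | exact absurd (hU 12) (not_represents_of_forall_le (X := 1) (Y := 3) (Z := 5)
        (by decide) (by decide) (by decide) (by decide))
    | exact absurd (hU 19) (not_represents_of_forall_le (X := 1) (Y := 4) (Z := 6)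
        (by decide) (by decide) (by decide) (by decide))

theorem mem_universalCoeffs_of_b_eq_one (hU : Universal a 1 c d) (ha : 3 ≤ a) (hd : 2 ≤ d)
    (hdc : ¬ d ∣ c) : (a, 1, c, d) ∈ universalCoeffs := by
  obtain rfl : d = 2 := by
    obtain ⟨x, hx, y, hy, z, hz, h⟩ :=
      (hU 2).exists_le (X := 1) (Y := 1) (Z := 1) (by omega) (by omega) (by omega)
    interval_cases x <;> interval_cases y <;> interval_cases z <;> omega
  have : a = 3 ∨ a = 4 ∨ a = 5 ∨ c = 1 := by
    obtain ⟨x, hx, y, hy, z, hz, h⟩ :=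
      (hU 5).exists_le (X := 1) (Y := 2) (Z := 2) (by omega) (by omega) (by omega)
    interval_cases x <;> interval_cases y <;> interval_cases z <;> omega
  rcases this with rfl | rfl | rfl | rfl
  · exact hU.mem_universalCoeffs_three_one_c_two hdc
  · exact hU.mem_universalCoeffs_four_one_c_two hdc
  · exact (not_universal_five_one_c_two hdc hU).elim
  · exact hU.mem_universalCoeffs_a_one_one_two ha

theorem mem_universalCoeffs (hU : Universal a b c d) (ha : 0 < a) (hb : 0 < b) (hd : 2 ≤ d)
    (hdc : ¬ d ∣ c) (hab : (a, b) ≠ (1, 1)) (hab' : (a, b) ≠ (2, 1)) :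
    (a, b, c, d) ∈ universalCoeffs := by
  have : a = 1 ∨ b = 1 := by
    obtain ⟨x, hx, y, hy, z, hz, h⟩ :=
      (hU 1).exists_le (X := 1) (Y := 1) (Z := 0) (by omega) (by omega) (by omega)
    interval_cases x <;> interval_cases y <;> interval_cases z <;> omega
  rcases this with rfl | rfl
  · have : b ≠ 1 := by rintro rfl; exact hab rfl
    exact hU.mem_universalCoeffs_of_a_eq_one (by omega) hd hdc
  · have : a ≠ 1 := by rintro rfl; exact hab rfl
    have : a ≠ 2 := by rintro rfl; exact hab' rfl
    exact hU.mem_universalCoeffs_of_b_eq_one (by omega) hd hdc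

end Universal

theorem stmt_3_general (a b c d : ℕ) (ha : 0 < a) (hb : 0 < b)
    (hab : (a, b) ≠ (1, 1)) (hab' : (a, b) ≠ (2, 1))
    (hd : 0 < d) (hdc : ¬ d ∣ c)
    (huniv : ∀ n : ℕ, ∃ x y z : ℕ,
      (n : ℤ) = (a : ℤ) * triZ x + (b : ℤ) * (y : ℤ) ^ 2 + polF c d z) :
    (a = 1 ∧ b = 2 ∧ ∀ z : ℕ, polF c d z = (z : ℤ) * ((z : ℤ) + 3) / 2) ∨
    (a = 1 ∧ b = 2 ∧ ∀ z : ℕ, polF c d z = (z : ℤ) * ((z : ℤ) + 5) / 2) ∨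
    (a = 1 ∧ b = 2 ∧ ∀ z : ℕ, polF c d z = (z : ℤ) * ((z : ℤ) + 7) / 2) ∨
    (a = 1 ∧ b = 2 ∧ ∀ z : ℕ, polF c d z = (z : ℤ) * ((z : ℤ) + 3)) ∨
    (a = 1 ∧ b = 2 ∧ ∀ z : ℕ, polF c d z = (z : ℤ) * (3 * (z : ℤ) + 1)) ∨
    (a = 1 ∧ b = 2 ∧ ∀ z : ℕ, polF c d z = (z : ℤ) * (3 * (z : ℤ) + 1) / 2) ∨
    (a = 1 ∧ b = 2 ∧ ∀ z : ℕ, polF c d z = (z : ℤ) * (3 * (z : ℤ) + 5) / 2) ∨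
    (a = 1 ∧ b = 2 ∧ ∀ z : ℕ, polF c d z = (z : ℤ) * (5 * (z : ℤ) - 1) / 2) ∨
    (a = 1 ∧ b = 2 ∧ ∀ z : ℕ, polF c d z = (z : ℤ) * (7 * (z : ℤ) - 3) / 2) ∨
    (a = 1 ∧ b = 2 ∧ ∀ z : ℕ, polF c d z = (z : ℤ) * (9 * (z : ℤ) - 5) / 2) ∨
    (a = 1 ∧ b = 2 ∧ ∀ z : ℕ, polF c d z = (z : ℤ) * (9 * (z : ℤ) - 1) / 2) ∨
    (a = 1 ∧ b = 3 ∧ ∀ z : ℕ, polF c d z = (z : ℤ) * (3 * (z : ℤ) + 1) / 2) ∨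
    (a = 1 ∧ b = 4 ∧ ∀ z : ℕ, polF c d z = (z : ℤ) * ((z : ℤ) + 3) / 2) ∨
    (a = 1 ∧ b = 4 ∧ ∀ z : ℕ, polF c d z = (z : ℤ) * (3 * (z : ℤ) + 1) / 2) ∨
    (a = 3 ∧ b = 1 ∧ ∀ z : ℕ, polF c d z = (z : ℤ) * ((z : ℤ) + 3) / 2) ∨
    (a = 3 ∧ b = 1 ∧ ∀ z : ℕ, polF c d z = (z : ℤ) * (3 * (z : ℤ) + 1) / 2) ∨
    (a = 4 ∧ b = 1 ∧ ∀ z : ℕ, polF c d z = (z : ℤ) * ((z : ℤ) + 3) / 2) ∨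
    (a = 6 ∧ b = 1 ∧ ∀ z : ℕ, polF c d z = (z : ℤ) * ((z : ℤ) + 3) / 2) := by
  have hd₂ : 2 ≤ d := by
    have : d ≠ 1 := by rintro rfl; exact hdc (one_dvd c)
    omega
  have hU : Universal a b c d := fun n => by
    obtain ⟨x, y, z, h⟩ := huniv n
    exact represents_of_eq h
  have hmem := hU.mem_universalCoeffs ha hb hd₂ hdc hab hab'
  generalize e : (a, b, c, d) = t at hmem
  fin_cases hmem <;> simp only [Prod.mk.injEq] at e <;> obtain ⟨rfl, rfl, rfl, rfl⟩ := e
  -- after `ring_nf` both sides are linear in the atoms `z` and `z ^ 2` up to one division by 2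
  all_goals repeat first
    | exact Or.inl ⟨rfl, rfl, fun z => by unfold polF; ring_nf; omega⟩
    | exact ⟨rfl, rfl, fun z => by unfold polF; ring_nf; omega⟩
    | refine Or.inr ?_

theorem stmt_3 (a b c d : ℕ) (ha : 0 < a) (hb : 0 < b)
    (hab : (a, b) ≠ (1, 1)) (hab' : (a, b) ≠ (2, 1))
    (hc : 0 < c) (hd : 0 < d) (hdc : ¬ d ∣ c)
    (huniv : ∀ n : ℕ, ∃ x y z : ℕ,
      (n : ℤ) = (a : ℤ) * triZ x + (b : ℤ) * (y : ℤ) ^ 2 + polF c d z) :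
    (a = 1 ∧ b = 2 ∧ ∀ z : ℕ, polF c d z = (z : ℤ) * ((z : ℤ) + 3) / 2) ∨
    (a = 1 ∧ b = 2 ∧ ∀ z : ℕ, polF c d z = (z : ℤ) * ((z : ℤ) + 5) / 2) ∨
    (a = 1 ∧ b = 2 ∧ ∀ z : ℕ, polF c d z = (z : ℤ) * ((z : ℤ) + 7) / 2) ∨
    (a = 1 ∧ b = 2 ∧ ∀ z : ℕ, polF c d z = (z : ℤ) * ((z : ℤ) + 3)) ∨
    (a = 1 ∧ b = 2 ∧ ∀ z : ℕ, polF c d z = (z : ℤ) * (3 * (z : ℤ) + 1)) ∨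
    (a = 1 ∧ b = 2 ∧ ∀ z : ℕ, polF c d z = (z : ℤ) * (3 * (z : ℤ) + 1) / 2) ∨
    (a = 1 ∧ b = 2 ∧ ∀ z : ℕ, polF c d z = (z : ℤ) * (3 * (z : ℤ) + 5) / 2) ∨
    (a = 1 ∧ b = 2 ∧ ∀ z : ℕ, polF c d z = (z : ℤ) * (5 * (z : ℤ) - 1) / 2) ∨
    (a = 1 ∧ b = 2 ∧ ∀ z : ℕ, polF c d z = (z : ℤ) * (7 * (z : ℤ) - 3) / 2) ∨
    (a = 1 ∧ b = 2 ∧ ∀ z : ℕ, polF c d z = (z : ℤ) * (9 * (z : ℤ) - 5) / 2) ∨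
    (a = 1 ∧ b = 2 ∧ ∀ z : ℕ, polF c d z = (z : ℤ) * (9 * (z : ℤ) - 1) / 2) ∨
    (a = 1 ∧ b = 3 ∧ ∀ z : ℕ, polF c d z = (z : ℤ) * (3 * (z : ℤ) + 1) / 2) ∨
    (a = 1 ∧ b = 4 ∧ ∀ z : ℕ, polF c d z = (z : ℤ) * ((z : ℤ) + 3) / 2) ∨
    (a = 1 ∧ b = 4 ∧ ∀ z : ℕ, polF c d z = (z : ℤ) * (3 * (z : ℤ) + 1) / 2) ∨
    (a = 3 ∧ b = 1 ∧ ∀ z : ℕ, polF c d z = (z : ℤ) * ((z : ℤ) + 3) / 2) ∨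
    (a = 3 ∧ b = 1 ∧ ∀ z : ℕ, polF c d z = (z : ℤ) * (3 * (z : ℤ) + 1) / 2) ∨
    (a = 4 ∧ b = 1 ∧ ∀ z : ℕ, polF c d z = (z : ℤ) * ((z : ℤ) + 3) / 2) ∨
    (a = 6 ∧ b = 1 ∧ ∀ z : ℕ, polF c d z = (z : ℤ) * ((z : ℤ) + 3) / 2) :=
  stmt_3_general a b c d ha hb hab hab' hd hdc huniv
end

section
/- The sum T_x + T_y + z(z+2) is universal over ℕ; that is, every n ∈ ℕ can be written as T_x + T_y + z(z+2) with x, y, z ∈ ℕ. -/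
/-!
Completing squares, `n = T_x + T_y + z (z + 2)` amounts to
`4 n + 5 = (x + y + 1) ^ 2 + (x - y) ^ 2 + (2 z + 2) ^ 2`, so it suffices to write every
`N ≡ 1 (mod 4)`, `N > 1`, as `a ^ 2 + b ^ 2 + (2 k) ^ 2` with `k ≠ 0`. By the three-square
theorem `N` is a sum of three squares, two of them even; these two vanish only when `N = t ^ 2`,
and then `t ^ 2 = (t / p) ^ 2 p ^ 2` for a prime `p ∣ t`, where `p ^ 2` is handled by a
four-square representation of `p` and `(u + v) ^ 2 = (u - v) ^ 2 + 4 u v`.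

The three-square theorem for `N ≡ 1 (mod 4)` is proved classically: a Dirichlet prime
`P ≡ 1 (mod 4)`, `P ≡ -1 (mod N)` and quadratic reciprocity produce a positive definite integral
ternary form of determinant one with corner coefficient `N`, and Hermite's bound on the minimum
of such forms (through Lagrange reduction of binary forms) shows that every positive definite
integral ternary form of determinant one is a sum of three squares of integral linear forms.
-/

open Matrix

section QuadraticForms

variable {n : Type*} [Fintype n]

lemma dotProduct_mulVec_transpose_mul_mul {R : Type*} [CommRing R] (G W : Matrix n n R)
    (v : n → R) : v ⬝ᵥ (Wᵀ * G * W) *ᵥ v = W *ᵥ v ⬝ᵥ G *ᵥ (W *ᵥ v) := by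
  rw [← mulVec_mulVec, ← mulVec_mulVec, dotProduct_mulVec, vecMul_transpose]

lemma transpose_mul_mul_apply_self {R : Type*} [CommRing R] [DecidableEq n]
    (G W : Matrix n n R) (i : n) : (Wᵀ * G * W) i i = W.col i ⬝ᵥ G *ᵥ W.col i := by
  rw [← mulVec_single_one, ← dotProduct_mulVec_transpose_mul_mul]
  simp

lemma Matrix.IsSymm.transpose_mul_mul {R : Type*} [CommSemiring R] {G : Matrix n n R}
    (hG : G.IsSymm) (W : Matrix n n R) : (Wᵀ * G * W).IsSymm := by
  simp [IsSymm, transpose_mul, hG.eq, Matrix.mul_assoc]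

lemma col_ne_zero_of_det_ne_zero [DecidableEq n] {W : Matrix n n ℤ} (hW : W.det ≠ 0) (i : n) :
    W.col i ≠ 0 := fun h =>
  hW (det_transpose W ▸ det_eq_zero_of_row_eq_zero i fun j => congrFun h j)

lemma exists_forall_dotProduct_mulVec_le [Nonempty n] {G : Matrix n n ℤ}
    (hpos : ∀ v ≠ 0, 0 < v ⬝ᵥ G *ᵥ v) : ∃ v ≠ 0, ∀ w ≠ 0, v ⬝ᵥ G *ᵥ v ≤ w ⬝ᵥ G *ᵥ w := by
  let f : (n → ℤ) → ℕ := fun w => (w ⬝ᵥ G *ᵥ w).toNat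
  have hne : {w : n → ℤ | w ≠ 0}.Nonempty := ⟨1, one_ne_zero⟩
  obtain ⟨v, hv, hle⟩ : ∃ v ∈ {w : n → ℤ | w ≠ 0}, ∀ w ∈ {w : n → ℤ | w ≠ 0}, f v ≤ f w :=
    ⟨_, Function.argminOn_mem f _ hne, fun w hw => Function.argminOn_le f _ hw⟩
  refine ⟨v, hv, fun w hw => ?_⟩
  have h := hle w hw
  have := hpos v hv
  have := hpos w hw
  simp only [f] at h
  omega

lemma isUnit_of_forall_dvd_of_forall_le {G : Matrix n n ℤ} (hpos : ∀ v ≠ 0, 0 < v ⬝ᵥ G *ᵥ v)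
    {v : n → ℤ} (hv : v ≠ 0) (hmin : ∀ w ≠ 0, v ⬝ᵥ G *ᵥ v ≤ w ⬝ᵥ G *ᵥ w) {d : ℤ}
    (hd : ∀ i, d ∣ v i) : IsUnit d := by
  choose w hw using hd
  have hvw : v = d • w := funext hw
  have hw0 : w ≠ 0 := by rintro rfl; simp [hvw] at hv
  have hQ : v ⬝ᵥ G *ᵥ v = d ^ 2 * (w ⬝ᵥ G *ᵥ w) := by
    simp only [hvw, mulVec_smul, dotProduct_smul, smul_dotProduct, smul_eq_mul]
    ring
  have hle := hmin w hw0
  have := hpos v hv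
  have hd1 : d ^ 2 ≤ 1 := by nlinarith
  have hd0 : d ≠ 0 := by rintro rfl; simp [hvw] at hv
  have : -1 ≤ d ∧ d ≤ 1 := ⟨by nlinarith, by nlinarith⟩
  exact Int.isUnit_iff.mpr (by omega)

lemma exists_forall_dotProduct_mulVec_eq_of_transpose_mul_mul [DecidableEq n]
    {G W L : Matrix n n ℤ} (hW : IsUnit W.det)
    (h : ∀ u, u ⬝ᵥ (Wᵀ * G * W) *ᵥ u = L *ᵥ u ⬝ᵥ L *ᵥ u) :
    ∃ L' : Matrix n n ℤ, ∀ v, v ⬝ᵥ G *ᵥ v = L' *ᵥ v ⬝ᵥ L' *ᵥ v := by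
  refine ⟨L * W⁻¹, fun v => ?_⟩
  have := h (W⁻¹ *ᵥ v)
  rwa [dotProduct_mulVec_transpose_mul_mul, mulVec_mulVec, mul_nonsing_inv _ hW, one_mulVec,
    mulVec_mulVec] at this

end QuadraticForms

lemma exists_abs_two_mul_mul_add_le {a : ℤ} (ha : 0 < a) (b : ℤ) :
    ∃ k : ℤ, |2 * (a * k + b)| ≤ a := by
  have h0 := Int.emod_nonneg b ha.ne'
  have h1 := Int.emod_lt_of_pos b ha
  have h2 := Int.mul_ediv_add_emod b a
  by_cases h : 2 * (b % a) ≤ a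
  · exact ⟨-(b / a), abs_le.mpr ⟨by linarith, by linarith⟩⟩
  · exact ⟨-(b / a) - 1, abs_le.mpr ⟨by linarith, by linarith⟩⟩

section CornerComplement

variable {n : ℕ} {G : Matrix (Fin (n + 1)) (Fin (n + 1)) ℤ}

/-- `G 0 0` times the Schur complement of the corner entry `G 0 0` of `G`. -/
def cornerComplement (G : Matrix (Fin (n + 1)) (Fin (n + 1)) ℤ) : Matrix (Fin n) (Fin n) ℤ :=
  of fun i j => G 0 0 * G i.succ j.succ - G 0 i.succ * G 0 j.succ

lemma isSymm_cornerComplement (hG : G.IsSymm) : (cornerComplement G).IsSymm :=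
  IsSymm.ext fun i j => by simp [cornerComplement, hG.apply i.succ j.succ, mul_comm]

lemma mul_dotProduct_mulVec_eq_sq_add (hG : G.IsSymm) (v : Fin (n + 1) → ℤ) :
    G 0 0 * (v ⬝ᵥ G *ᵥ v) =
      (∑ j, G 0 j * v j) ^ 2 + Fin.tail v ⬝ᵥ cornerComplement G *ᵥ Fin.tail v := by
  set S := ∑ j : Fin n, G 0 j.succ * v j.succ
  set T := ∑ i : Fin n, v i.succ * ∑ j : Fin n, G i.succ j.succ * v j.succ
  have hQ : v ⬝ᵥ G *ᵥ v = G 0 0 * v 0 ^ 2 + 2 * v 0 * S + T := by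
    have : ∑ i : Fin n, v i.succ * (G i.succ 0 * v 0) = v 0 * S := by
      rw [Finset.mul_sum]
      exact Finset.sum_congr rfl fun i _ => by rw [hG.apply 0 i.succ]; ring
    simp only [dotProduct, mulVec, Fin.sum_univ_succ, mul_add, Finset.sum_add_distrib, this]
    ring
  have hC : Fin.tail v ⬝ᵥ cornerComplement G *ᵥ Fin.tail v = G 0 0 * T - S ^ 2 := by
    simp only [S, T, sq, Finset.sum_mul_sum]
    simp only [dotProduct, mulVec, cornerComplement, of_apply, Fin.tail, Finset.mul_sum,
      ← Finset.sum_sub_distrib]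
    exact Finset.sum_congr rfl fun i _ => Finset.sum_congr rfl fun j _ => by ring
  rw [Fin.sum_univ_succ, hQ, hC]
  ring

lemma dotProduct_mulVec_pos_of_cornerComplement (hG : G.IsSymm) (h0 : 0 < G 0 0)
    (hS : ∀ w ≠ 0, 0 < w ⬝ᵥ cornerComplement G *ᵥ w) {v : Fin (n + 1) → ℤ} (hv : v ≠ 0) :
    0 < v ⬝ᵥ G *ᵥ v := by
  refine pos_of_mul_pos_right ((mul_dotProduct_mulVec_eq_sq_add hG v).symm ▸ ?_) h0.le
  by_cases ht : Fin.tail v = 0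
  · have hv0 : v 0 ≠ 0 := fun h => hv (funext fun i => Fin.cases h (congrFun ht) i)
    have hvs : ∀ j : Fin n, v j.succ = 0 := congrFun ht
    have hsum : ∑ j, G 0 j * v j = G 0 0 * v 0 := by simp [Fin.sum_univ_succ, hvs]
    have := mul_ne_zero h0.ne' hv0
    rw [hsum, ht, zero_dotProduct, add_zero]
    positivity
  · exact add_pos_of_nonneg_of_pos (sq_nonneg _) (hS _ ht)

end CornerComplement

section Binary

variable {G : Matrix (Fin 2) (Fin 2) ℤ}

def IsLagrangeReduced (H : Matrix (Fin 2) (Fin 2) ℤ) : Prop :=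
  |2 * H 0 1| ≤ H 0 0 ∧ H 0 0 ≤ H 1 1

lemma IsLagrangeReduced.three_mul_sq_le_four_mul_det {H : Matrix (Fin 2) (Fin 2) ℤ}
    (hred : IsLagrangeReduced H) (hH : H.IsSymm) : 3 * H 0 0 ^ 2 ≤ 4 * H.det := by
  obtain ⟨hb, hc⟩ := hred
  have h0 := (abs_nonneg _).trans hb
  have := sq_le_sq' (abs_le.mp hb).1 (abs_le.mp hb).2
  rw [det_fin_two, hH.apply 0 1]
  nlinarith

lemma IsLagrangeReduced.eq_one {H : Matrix (Fin 2) (Fin 2) ℤ} (hred : IsLagrangeReduced H)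
    (hH : H.IsSymm) (hdet : H.det = 1) : H = 1 := by
  have h3 := hred.three_mul_sq_le_four_mul_det hH
  obtain ⟨hb, hc⟩ := hred
  have hb' := abs_le.mp hb
  rw [det_fin_two, hH.apply 0 1] at hdet
  have h00 : H 0 0 = 1 := by nlinarith
  have h01 : H 0 1 = 0 := by omega
  have h11 : H 1 1 = 1 := by rw [h00, h01] at hdet; linarith
  ext i j
  fin_cases i <;> fin_cases j <;> simp [h00, h11, h01, hH.apply 0 1]

lemma exists_det_eq_one_col_eq_fin_two {v : Fin 2 → ℤ} (hv : IsCoprime (v 0) (v 1)) :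
    ∃ W : Matrix (Fin 2) (Fin 2) ℤ, W.det = 1 ∧ W.col 0 = v := by
  obtain ⟨a, b, h⟩ := hv
  refine ⟨!![v 0, -b; v 1, a], by rw [det_fin_two_of]; linear_combination h, ?_⟩
  ext i
  fin_cases i <;> rfl

lemma exists_isLagrangeReduced_transpose_mul_mul (hpos : ∀ v ≠ 0, 0 < v ⬝ᵥ G *ᵥ v) :
    ∃ W : Matrix (Fin 2) (Fin 2) ℤ, W.det = 1 ∧ IsLagrangeReduced (Wᵀ * G * W) := by
  obtain ⟨v, hv, hmin⟩ := exists_forall_dotProduct_mulVec_le hpos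
  have hcop : IsRelPrime (v 0) (v 1) := fun d h0 h1 =>
    isUnit_of_forall_dvd_of_forall_le hpos hv hmin fun i => by fin_cases i <;> assumption
  obtain ⟨W₀, hW₀, hcol⟩ := exists_det_eq_one_col_eq_fin_two hcop.isCoprime
  obtain ⟨k, hk⟩ := exists_abs_two_mul_mul_add_le (hpos v hv) ((W₀ᵀ * G * W₀) 0 1)
  set W := W₀ * !![1, k; 0, 1]
  have hW : W.det = 1 := by simp [W, det_mul, hW₀]
  have hW0 : W.col 0 = v := by
    rw [← hcol]
    ext i
    simp [W, Matrix.mul_apply, Fin.sum_univ_two]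
  have h00 : (Wᵀ * G * W) 0 0 = v ⬝ᵥ G *ᵥ v := by rw [transpose_mul_mul_apply_self, hW0]
  have h01 : (Wᵀ * G * W) 0 1 = (v ⬝ᵥ G *ᵥ v) * k + (W₀ᵀ * G * W₀) 0 1 := by
    have hconj : Wᵀ * G * W = !![1, k; 0, 1]ᵀ * (W₀ᵀ * G * W₀) * !![1, k; 0, 1] := by
      simp only [W, transpose_mul, Matrix.mul_assoc]
    have h00₀ : (W₀ᵀ * G * W₀) 0 0 = v ⬝ᵥ G *ᵥ v := by
      rw [transpose_mul_mul_apply_self, hcol]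
    rw [hconj, ← h00₀]
    simp [Matrix.mul_apply, Fin.sum_univ_two]
  refine ⟨W, hW, by rwa [h00, h01], ?_⟩
  rw [h00, transpose_mul_mul_apply_self]
  exact hmin _ (col_ne_zero_of_det_ne_zero (by simp [hW]) 1)

lemma exists_three_mul_sq_le_four_mul_det_fin_two (hG : G.IsSymm)
    (hpos : ∀ v ≠ 0, 0 < v ⬝ᵥ G *ᵥ v) : ∃ v ≠ 0, 3 * (v ⬝ᵥ G *ᵥ v) ^ 2 ≤ 4 * G.det := by
  obtain ⟨W, hW, hred⟩ := exists_isLagrangeReduced_transpose_mul_mul hpos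
  refine ⟨W.col 0, col_ne_zero_of_det_ne_zero (W := W) (by simp [hW]) 0, ?_⟩
  have hdet : (Wᵀ * G * W).det = G.det := by simp [det_mul, hW]
  rw [← transpose_mul_mul_apply_self, ← hdet]
  exact hred.three_mul_sq_le_four_mul_det (hG.transpose_mul_mul W)

theorem exists_forall_dotProduct_mulVec_eq_fin_two (hG : G.IsSymm)
    (hpos : ∀ v ≠ 0, 0 < v ⬝ᵥ G *ᵥ v) (hdet : G.det = 1) :
    ∃ L : Matrix (Fin 2) (Fin 2) ℤ, ∀ v, v ⬝ᵥ G *ᵥ v = L *ᵥ v ⬝ᵥ L *ᵥ v := by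
  obtain ⟨W, hW, hred⟩ := exists_isLagrangeReduced_transpose_mul_mul hpos
  have hH : Wᵀ * G * W = 1 :=
    hred.eq_one (hG.transpose_mul_mul W) (by simp [det_mul, hW, hdet])
  exact exists_forall_dotProduct_mulVec_eq_of_transpose_mul_mul (W := W) (L := 1) (by simp [hW])
    fun u => by simp [hH]

end Binary

section Ternary

variable {G : Matrix (Fin 3) (Fin 3) ℤ}

lemma det_cornerComplement (hG : G.IsSymm) : (cornerComplement G).det = G 0 0 * G.det := by
  rw [det_fin_two, det_fin_three]
  simp [cornerComplement, hG.apply 0 1, hG.apply 0 2, hG.apply 1 2]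
  ring

lemma dotProduct_mulVec_pos_fin_three (hG : G.IsSymm) (h0 : 0 < G 0 0)
    (h1 : 0 < G 0 0 * G 1 1 - G 0 1 ^ 2) (hdet : 0 < G.det) {v : Fin 3 → ℤ} (hv : v ≠ 0) :
    0 < v ⬝ᵥ G *ᵥ v := by
  have hS := isSymm_cornerComplement hG
  have hdetS : 0 < (cornerComplement G).det := by rw [det_cornerComplement hG]; positivity
  rw [det_fin_two, hS.apply 0 1] at hdetS
  refine dotProduct_mulVec_pos_of_cornerComplement hG h0 (fun w hw =>
    dotProduct_mulVec_pos_of_cornerComplement hS (by simpa [cornerComplement, sq] using h1)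
      (fun u hu => ?_) hw) hv
  have hu0 : u 0 ≠ 0 := fun h => hu (funext fun i => by fin_cases i; exact h)
  have := mul_self_pos.mpr hu0
  simp only [dotProduct, mulVec, Finset.univ_unique, Fin.default_eq_zero, Finset.sum_singleton]
  change 0 < u 0 * ((cornerComplement G 0 0 * cornerComplement G 1 1 -
    cornerComplement G 0 1 * cornerComplement G 0 1) * u 0)
  nlinarith

lemma three_mul_sq_le_four_mul_dotProduct_cornerComplement (hG : G.IsSymm) (h0 : 0 < G 0 0)
    (hmin : ∀ u ≠ 0, G 0 0 ≤ u ⬝ᵥ G *ᵥ u) :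
    ∀ w ≠ 0, 3 * G 0 0 ^ 2 ≤ 4 * (w ⬝ᵥ cornerComplement G *ᵥ w) := by
  intro w hw
  obtain ⟨x, hx⟩ := exists_abs_two_mul_mul_add_le h0 (G 0 1 * w 0 + G 0 2 * w 1)
  have hu : (Fin.cons x w : Fin 3 → ℤ) ≠ 0 := fun h => hw (funext fun i => by
    simpa using congrFun h i.succ)
  have key := mul_dotProduct_mulVec_eq_sq_add hG (Fin.cons x w)
  rw [Fin.tail_cons, Fin.sum_univ_succ, Fin.sum_univ_two, Fin.cons_zero] at key
  simp only [Fin.cons_succ] at key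
  simp only [Fin.succ_zero_eq_one, Fin.succ_one_eq_two] at key
  have hle := hmin _ hu
  have := sq_le_sq' (abs_le.mp hx).1 (abs_le.mp hx).2
  nlinarith

lemma corner_eq_one_of_forall_le (hG : G.IsSymm) (hdet : G.det = 1) (h0 : 0 < G 0 0)
    (hmin : ∀ u ≠ 0, G 0 0 ≤ u ⬝ᵥ G *ᵥ u) : G 0 0 = 1 := by
  -- Hermite: with `m = G 0 0`, the minimum `s` of the corner complement satisfies
  -- `3 m ^ 2 ≤ 4 s` and `3 s ^ 2 ≤ 4 m`, whence `27 m ^ 3 ≤ 64`.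
  have hS := three_mul_sq_le_four_mul_dotProduct_cornerComplement hG h0 hmin
  obtain ⟨w, hw, hle⟩ := exists_three_mul_sq_le_four_mul_det_fin_two (isSymm_cornerComplement hG)
    fun w hw => by nlinarith [hS w hw]
  rw [det_cornerComplement hG, hdet, mul_one] at hle
  have h1 := hS w hw
  have h2 : 9 * G 0 0 ^ 4 ≤ 16 * (w ⬝ᵥ cornerComplement G *ᵥ w) ^ 2 := by nlinarith
  have h3 : G 0 0 * (27 * G 0 0 ^ 3) ≤ G 0 0 * 64 := by nlinarith
  have h4 : 27 * G 0 0 ^ 3 ≤ 64 := le_of_mul_le_mul_left h3 h0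
  have : G 0 0 < 2 := by
    by_contra! h
    nlinarith [pow_le_pow_left₀ (by norm_num) h 3]
  omega

lemma exists_forall_dotProduct_mulVec_eq_of_corner_eq_one (hG : G.IsSymm) (hdet : G.det = 1)
    (h1 : G 0 0 = 1) (hmin : ∀ u ≠ 0, G 0 0 ≤ u ⬝ᵥ G *ᵥ u) :
    ∃ L : Matrix (Fin 3) (Fin 3) ℤ, ∀ v, v ⬝ᵥ G *ᵥ v = L *ᵥ v ⬝ᵥ L *ᵥ v := by
  have hS := three_mul_sq_le_four_mul_dotProduct_cornerComplement hG (by omega) hmin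
  obtain ⟨V, hV⟩ := exists_forall_dotProduct_mulVec_eq_fin_two (isSymm_cornerComplement hG)
    (fun w hw => by nlinarith [hS w hw]) (by rw [det_cornerComplement hG, h1, hdet, mul_one])
  refine ⟨!![1, G 0 1, G 0 2; 0, V 0 0, V 0 1; 0, V 1 0, V 1 1], fun v => ?_⟩
  have key := mul_dotProduct_mulVec_eq_sq_add hG v
  rw [h1, one_mul, hV, Fin.sum_univ_three, h1] at key
  rw [key]
  simp [dotProduct, mulVec, Fin.sum_univ_three, Fin.sum_univ_two, Fin.tail]
  ring

lemma Int.exists_isCoprime_mul (a b : ℤ) :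
    ∃ g r s : ℤ, IsCoprime r s ∧ a = g * r ∧ b = g * s := by
  by_cases h : Int.gcd a b = 0
  · obtain ⟨rfl, rfl⟩ := Int.gcd_eq_zero_iff.mp h
    exact ⟨0, 1, 0, isCoprime_one_left, by simp, by simp⟩
  · obtain ⟨g, r, s, -, hrs, ha, hb⟩ := Int.exists_gcd_one' (Nat.pos_of_ne_zero h)
    exact ⟨g, r, s, Int.isCoprime_iff_gcd_eq_one.mpr hrs, by rw [ha, mul_comm],
      by rw [hb, mul_comm]⟩

lemma exists_det_eq_one_col_eq_fin_three {v : Fin 3 → ℤ}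
    (hv : ∀ d : ℤ, (∀ i, d ∣ v i) → IsUnit d) :
    ∃ W : Matrix (Fin 3) (Fin 3) ℤ, W.det = 1 ∧ W.col 0 = v := by
  obtain ⟨g, r, s, ⟨a, b, hab⟩, h0, h1⟩ := Int.exists_isCoprime_mul (v 0) (v 1)
  have hgt : IsRelPrime g (v 2) := fun d hg h2 => hv d fun i => by
    fin_cases i
    exacts [h0 ▸ hg.mul_right r, h1 ▸ hg.mul_right s, h2]
  obtain ⟨α, β, hαβ⟩ := hgt.isCoprime
  refine ⟨!![v 0, -b, -β * r; v 1, a, -β * s; v 2, 0, α], ?_, ?_⟩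
  · simp [det_fin_three, h0, h1]
    linear_combination (α * g + β * v 2) * hab + hαβ
  · ext i
    fin_cases i <;> rfl

theorem exists_forall_dotProduct_mulVec_eq_fin_three (hG : G.IsSymm)
    (hpos : ∀ v ≠ 0, 0 < v ⬝ᵥ G *ᵥ v) (hdet : G.det = 1) :
    ∃ L : Matrix (Fin 3) (Fin 3) ℤ, ∀ v, v ⬝ᵥ G *ᵥ v = L *ᵥ v ⬝ᵥ L *ᵥ v := by
  obtain ⟨v, hv, hmin⟩ := exists_forall_dotProduct_mulVec_le hpos
  obtain ⟨W, hW, hcol⟩ := exists_det_eq_one_col_eq_fin_three fun d hd =>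
    isUnit_of_forall_dvd_of_forall_le hpos hv hmin hd
  have hW0 : W.det ≠ 0 := by simp [hW]
  have h00 : (Wᵀ * G * W) 0 0 = v ⬝ᵥ G *ᵥ v := by rw [transpose_mul_mul_apply_self, hcol]
  have hHmin : ∀ u ≠ 0, (Wᵀ * G * W) 0 0 ≤ u ⬝ᵥ (Wᵀ * G * W) *ᵥ u := fun u hu => by
    rw [h00, dotProduct_mulVec_transpose_mul_mul]
    exact hmin _ fun h => hu (eq_zero_of_mulVec_eq_zero hW0 h)
  have hHsym := hG.transpose_mul_mul W
  have hHdet : (Wᵀ * G * W).det = 1 := by simp [det_mul, hW, hdet]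
  have h1 := corner_eq_one_of_forall_le hHsym hHdet (h00 ▸ hpos v hv) hHmin
  obtain ⟨L, hL⟩ := exists_forall_dotProduct_mulVec_eq_of_corner_eq_one hHsym hHdet h1 hHmin
  exact exists_forall_dotProduct_mulVec_eq_of_transpose_mul_mul (by simp [hW]) hL

end Ternary

lemma exists_prime_mod_four_eq_one_dvd_add_one {N : ℕ} (hN : N % 4 = 1) :
    ∃ P : ℕ, P.Prime ∧ P % 4 = 1 ∧ N ∣ P + 1 := by
  have hcop : Nat.Coprime (2 * N - 1) (4 * N) := by
    rw [← Nat.isCoprime_iff_coprime]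
    exact ⟨-(2 * N + 1), N, by push_cast [show 1 ≤ 2 * N by omega]; ring⟩
  have : NeZero (4 * N) := ⟨by omega⟩
  obtain ⟨P, -, hP, hPmod⟩ :=
    Nat.forall_exists_prime_gt_and_eq_mod ((ZMod.isUnit_iff_coprime _ _).mpr hcop) 0
  have hmod : P ≡ 2 * N - 1 [MOD 4 * N] := (ZMod.natCast_eq_natCast_iff _ _ _).mp hPmod
  refine ⟨P, hP, ?_, ?_⟩
  · have : P % 4 = (2 * N - 1) % 4 := hmod.of_mul_right N
    omega
  · have h := (hmod.of_mul_left 4).add_right 1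
    rw [show 2 * N - 1 + 1 = 2 * N by omega] at h
    exact Nat.modEq_zero_iff_dvd.mp (h.trans (Nat.modEq_zero_iff_dvd.mpr (dvd_mul_left N 2)))

lemma exists_dvd_mul_sq_add_one {N P : ℕ} [Fact P.Prime] (hN : N % 4 = 1) (hP : P % 4 = 1)
    (hNP : N ∣ P + 1) : ∃ e : ℤ, (P : ℤ) ∣ N * e ^ 2 + 1 := by
  have hN0 : (N : ZMod P) ≠ 0 := by
    rw [Ne, ZMod.natCast_eq_zero_iff]
    exact fun h => (Fact.out : P.Prime).not_dvd_one ((Nat.dvd_add_right dvd_rfl).mp (h.trans hNP))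
  -- `(-N / P) = (P / N) = (-1 / N) = 1`
  have hjac : jacobiSym (-N) P = 1 := by
    obtain ⟨k, hk⟩ := hNP
    have hPN : (P : ℤ) % N = -1 % N := Int.modEq_iff_dvd.mpr
      ⟨-k, by linear_combination (-1 : ℤ) * (by exact_mod_cast hk : (P : ℤ) + 1 = N * k)⟩
    rw [neg_eq_neg_one_mul, jacobiSym.mul_left, jacobiSym.at_neg_one (Nat.odd_iff.mpr (by omega)),
      ZMod.χ₄_nat_one_mod_four hP, one_mul,
      ← jacobiSym.quadratic_reciprocity_one_mod_four hP (Nat.odd_iff.mpr (by omega)),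
      jacobiSym.mod_left' hPN, jacobiSym.at_neg_one (Nat.odd_iff.mpr (by omega)),
      ZMod.χ₄_nat_one_mod_four hN]
  obtain ⟨s, hs⟩ := (legendreSym.eq_one_iff P (a := -N) (by simpa using hN0)).mp
    (by rw [jacobiSym.legendreSym.to_jacobiSym]; exact hjac)
  refine ⟨((s / N : ZMod P).val : ℤ), ?_⟩
  rw [← ZMod.intCast_zmod_eq_zero_iff_dvd]
  push_cast at hs ⊢
  rw [ZMod.natCast_zmod_val]
  field_simp
  linear_combination -hs

lemma exists_det_eq_one_ternary_form_corner_eq {N : ℕ} (hN : N % 4 = 1) :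
    ∃ G : Matrix (Fin 3) (Fin 3) ℤ, G.IsSymm ∧ (∀ v ≠ 0, 0 < v ⬝ᵥ G *ᵥ v) ∧ G.det = 1 ∧
      G 0 0 = N := by
  obtain ⟨P, hP, hP4, hNP⟩ := exists_prime_mod_four_eq_one_dvd_add_one hN
  have := Fact.mk hP
  obtain ⟨e, c, hc⟩ := exists_dvd_mul_sq_add_one hN hP4 hNP
  obtain ⟨k, hk⟩ := hNP
  have hk' : (P : ℤ) + 1 = N * k := by exact_mod_cast hk
  have hcop : IsCoprime (N : ℤ) P := ⟨k, -1, by linear_combination -hk'⟩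
  -- `f` is chosen so that `det = N * (P * f - e ^ 2) - P = 1`
  obtain ⟨f, hf⟩ : (N * P : ℤ) ∣ N * e ^ 2 + P + 1 :=
    hcop.mul_dvd ⟨e ^ 2 + k, by linear_combination hk'⟩ ⟨c + 1, by linear_combination hc⟩
  have hN0 : (0 : ℤ) < N := by exact_mod_cast (show 0 < N by omega)
  have hP0 : (0 : ℤ) < P := by exact_mod_cast hP.pos
  have hdet : !![(N : ℤ), 0, 1; 0, P, e; 1, e, f].det = 1 := by
    simp [det_fin_three]
    linear_combination -hf
  have hsym : !![(N : ℤ), 0, 1; 0, P, e; 1, e, f].IsSymm :=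
    IsSymm.ext fun i j => by fin_cases i <;> fin_cases j <;> rfl
  refine ⟨_, hsym, fun v hv => ?_, hdet, rfl⟩
  refine dotProduct_mulVec_pos_fin_three hsym hN0 ?_ (by rw [hdet]; norm_num) hv
  simpa using mul_pos hN0 hP0

theorem exists_sq_add_sq_add_sq_of_mod_four_eq_one {N : ℕ} (hN : N % 4 = 1) :
    ∃ x y z : ℤ, x ^ 2 + y ^ 2 + z ^ 2 = N := by
  obtain ⟨G, hG, hpos, hdet, hG0⟩ := exists_det_eq_one_ternary_form_corner_eq hN
  obtain ⟨L, hL⟩ := exists_forall_dotProduct_mulVec_eq_fin_three hG hpos hdet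
  refine ⟨L 0 0, L 1 0, L 2 0, ?_⟩
  have := hL (Pi.single 0 1)
  simp [dotProduct, Fin.sum_univ_three, hG0] at this
  rw [this]
  ring

def IsSqAddSqAddEvenSq (n : ℤ) : Prop :=
  ∃ x y k : ℤ, k ≠ 0 ∧ x ^ 2 + y ^ 2 + (2 * k) ^ 2 = n

lemma IsSqAddSqAddEvenSq.mul_sq {n : ℤ} (h : IsSqAddSqAddEvenSq n) {q : ℤ} (hq : q ≠ 0) :
    IsSqAddSqAddEvenSq (q ^ 2 * n) := by
  obtain ⟨x, y, k, hk, rfl⟩ := h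
  exact ⟨q * x, q * y, q * k, mul_ne_zero hq hk, by ring⟩

lemma isSqAddSqAddEvenSq_sq_of_sq_add_sq_ne_zero {a b c d : ℤ} (hab : a ^ 2 + b ^ 2 ≠ 0)
    (hcd : c ^ 2 + d ^ 2 ≠ 0) : IsSqAddSqAddEvenSq ((a ^ 2 + b ^ 2 + c ^ 2 + d ^ 2) ^ 2) := by
  -- `(u + v) ^ 2 = (u - v) ^ 2 + 4 * u * v`, and `u * v` is a nonzero sum of two squares
  have h : (a * c + b * d) ^ 2 + (a * d - b * c) ^ 2 = (a ^ 2 + b ^ 2) * (c ^ 2 + d ^ 2) := by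
    ring
  have hne : (a * c + b * d) ^ 2 + (a * d - b * c) ^ 2 ≠ 0 := h ▸ mul_ne_zero hab hcd
  by_cases hk : a * d - b * c = 0
  · refine ⟨a ^ 2 + b ^ 2 - c ^ 2 - d ^ 2, 0, a * c + b * d, fun h0 => hne (by simp [h0, hk]), ?_⟩
    linear_combination (-4) * h - 4 * (a * d - b * c) * hk
  · exact ⟨a ^ 2 + b ^ 2 - c ^ 2 - d ^ 2, 2 * (a * c + b * d), a * d - b * c, hk,
      by linear_combination (-4) * h⟩

lemma isSqAddSqAddEvenSq_sq_of_not_isSquare {m : ℕ} (hm : ¬IsSquare m) :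
    IsSqAddSqAddEvenSq ((m : ℤ) ^ 2) := by
  obtain ⟨a, b, c, d, h⟩ := Nat.sum_four_squares m
  have key : ∀ a b c d : ℕ, a ^ 2 + b ^ 2 + c ^ 2 + d ^ 2 = m → a ^ 2 + b ^ 2 ≠ 0 →
      c ^ 2 + d ^ 2 ≠ 0 → IsSqAddSqAddEvenSq ((m : ℤ) ^ 2) := fun a b c d h hab hcd => by
    rw [← h]
    push_cast
    exact isSqAddSqAddEvenSq_sq_of_sq_add_sq_ne_zero (by exact_mod_cast hab) (by exact_mod_cast hcd)
  have hsq : ∀ x : ℕ, x ^ 2 ≠ m := fun x hx => hm ⟨x, by rw [← hx, sq]⟩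
  by_cases hab : a ^ 2 + b ^ 2 = 0
  · refine key c 0 d 0 (by linarith) ?_ ?_ <;> simp only [zero_pow two_ne_zero, add_zero] <;>
      intro h0
    · exact hsq d (by linarith)
    · exact hsq c (by linarith)
  by_cases hcd : c ^ 2 + d ^ 2 = 0
  · refine key a 0 b 0 (by linarith) ?_ ?_ <;> simp only [zero_pow two_ne_zero, add_zero] <;>
      intro h0
    · exact hsq b (by linarith)
    · exact hsq a (by linarith)
  exact key a b c d h hab hcd

lemma isSqAddSqAddEvenSq_sq {t : ℕ} (ht : 1 < t) : IsSqAddSqAddEvenSq ((t : ℤ) ^ 2) := by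
  obtain ⟨p, hp, q, rfl⟩ := Nat.exists_prime_and_dvd ht.ne'
  have hnsq : ¬IsSquare p := by
    rintro ⟨r, rfl⟩
    rcases Nat.prime_mul_iff.mp hp with ⟨hr, rfl⟩ | ⟨hr, rfl⟩ <;> exact Nat.not_prime_one hr
  have hq : (q : ℤ) ≠ 0 := by rintro h; simp_all
  simpa [mul_pow, mul_comm] using (isSqAddSqAddEvenSq_sq_of_not_isSquare hnsq).mul_sq hq

lemma Int.even_and_sq_emod_four_eq_zero_or_odd_and_sq_emod_four_eq_one (w : ℤ) :
    Even w ∧ w ^ 2 % 4 = 0 ∨ Odd w ∧ w ^ 2 % 4 = 1 := by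
  rcases Int.even_or_odd w with hw | hw
  · obtain ⟨r, rfl⟩ := hw
    exact Or.inl ⟨⟨r, rfl⟩, by ring_nf; omega⟩
  · exact Or.inr ⟨hw, Int.sq_mod_four_eq_one_of_odd hw⟩

lemma isSqAddSqAddEvenSq_of_sq_add_sq_add_sq {N : ℕ} (hN : N % 4 = 1) (hsq : ¬IsSquare N)
    {x y z : ℤ} (h : x ^ 2 + y ^ 2 + z ^ 2 = N) : IsSqAddSqAddEvenSq N := by
  have of_even : ∀ {x y z : ℤ}, x ^ 2 + y ^ 2 + z ^ 2 = N → Even y → Even z →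
      IsSqAddSqAddEvenSq N := by
    rintro x y z h ⟨j, rfl⟩ ⟨k, rfl⟩
    by_cases hk : k = 0
    · by_cases hj : j = 0
      · subst hj hk
        refine absurd ⟨x.natAbs, ?_⟩ hsq
        zify
        rw [abs_mul_abs_self]
        linear_combination -h
      · exact ⟨x, k + k, j, hj, by linear_combination h⟩
    · exact ⟨x, j + j, k, hk, by linear_combination h⟩
  have hN' : (N : ℤ) % 4 = 1 := by omega
  rcases Int.even_and_sq_emod_four_eq_zero_or_odd_and_sq_emod_four_eq_one x with
    ⟨hx, hx4⟩ | ⟨hx, hx4⟩ <;>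
  rcases Int.even_and_sq_emod_four_eq_zero_or_odd_and_sq_emod_four_eq_one y with
    ⟨hy, hy4⟩ | ⟨hy, hy4⟩ <;>
  rcases Int.even_and_sq_emod_four_eq_zero_or_odd_and_sq_emod_four_eq_one z with
    ⟨hz, hz4⟩ | ⟨hz, hz4⟩
  all_goals first
    | exact of_even h hy hz
    | exact of_even (x := y) (by linear_combination h) hx hz
    | exact of_even (x := z) (by linear_combination h) hx hy
    | omega

lemma isSqAddSqAddEvenSq_of_mod_four_eq_one {N : ℕ} (hN : N % 4 = 1) (h1 : 1 < N) :
    IsSqAddSqAddEvenSq N := by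
  by_cases hsq : IsSquare N
  · obtain ⟨t, rfl⟩ := hsq
    have ht : 1 < t := by nlinarith
    simpa [sq] using isSqAddSqAddEvenSq_sq ht
  · obtain ⟨x, y, z, h⟩ := exists_sq_add_sq_add_sq_of_mod_four_eq_one hN
    exact isSqAddSqAddEvenSq_of_sq_add_sq_add_sq hN hsq h

lemma exists_eq_triangle_add_triangle {a b m : ℕ} (h : a ^ 2 + b ^ 2 = 4 * m + 1) :
    ∃ x y : ℕ, m = x * (x + 1) / 2 + y * (y + 1) / 2 := by
  wlog hba : b ≤ a generalizing a b
  · exact this (a := b) (b := a) (by rw [← h, add_comm]) (by omega)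
  have hodd : Odd (a + b) := by
    have : Odd (a ^ 2 + b ^ 2) := ⟨2 * m, by omega⟩
    simpa [Nat.odd_add, Nat.odd_pow_iff two_ne_zero, Nat.even_pow] using this
  obtain ⟨y, rfl⟩ : ∃ y, a = b + 2 * y + 1 := by
    obtain ⟨x, hx⟩ := hodd
    exact ⟨x - b, by omega⟩
  -- `x = b + y` and `y` satisfy `(2 x + 1) ^ 2 + (2 y + 1) ^ 2 = 2 (a ^ 2 + b ^ 2)`
  refine ⟨b + y, y, ?_⟩
  have h2 : (b + y) * (b + y + 1) + y * (y + 1) = 2 * m := by nlinarith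
  have := Nat.even_mul_succ_self (b + y)
  have := Nat.even_mul_succ_self y
  rw [Nat.even_iff] at *
  omega

lemma IsSqAddSqAddEvenSq.exists_eq_triangle_add_triangle_add {n : ℕ}
    (h : IsSqAddSqAddEvenSq (4 * n + 5)) :
    ∃ x y z : ℕ, n = x * (x + 1) / 2 + y * (y + 1) / 2 + z * (z + 2) := by
  obtain ⟨a, b, k, hk, h⟩ := h
  obtain ⟨z, hz⟩ : ∃ z : ℕ, k.natAbs = z + 1 :=
    ⟨k.natAbs - 1, by have := Int.natAbs_ne_zero.mpr hk; omega⟩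
  have h' : a.natAbs ^ 2 + b.natAbs ^ 2 + 4 * (z * (z + 2)) = 4 * n + 1 := by
    have hk2 : k ^ 2 = ((z : ℤ) + 1) ^ 2 := by rw [← Int.natAbs_sq k, hz]; push_cast; ring
    zify
    rw [sq_abs, sq_abs]
    linear_combination h - 4 * hk2
  obtain ⟨x, y, hxy⟩ := exists_eq_triangle_add_triangle (a := a.natAbs) (b := b.natAbs)
    (m := n - z * (z + 2)) (by omega)
  exact ⟨x, y, z, by omega⟩

theorem stmt_5 : ∀ n : ℕ, ∃ x y z : ℕ,
    n = x * (x + 1) / 2 + y * (y + 1) / 2 + z * (z + 2) := by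
  intro n
  have h := isSqAddSqAddEvenSq_of_mod_four_eq_one (N := 4 * n + 5) (by omega) (by omega)
  push_cast at h
  exact h.exists_eq_triangle_add_triangle_add
end

section
/- For every k ∈ {1, 2, 3, 4, 5, 6, 7}, the sum T_x + y² + z(z+2k+1)/2 is universal over ℕ; that is, every n ∈ ℕ can be written as T_x + y² + z(z+2k+1)/2 with x, y, z ∈ ℕ. -/
/-!
Put `N = n + T_k`. Since `4N + 1 ≡ 1 (mod 4)` is a sum of three squares, exactly one of them
odd, `4N + 1 = o² + 4u² + 4v²` with `o` odd and `v ≤ u`; then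
`2 (4N + 1) = (o + 2u)² + (o - 2u)² + 8v²`, that is `N = T_w + T_x + v²` with
`w = (o - 1)/2 + u` and `(2w + 1)² ≥ (4N + 1)/2`. Hence `w ≥ k` as soon as
`4n ≥ 6k² + 6k + 1`, and `T_{k+z} = T_k + z(z + 2k + 1)/2` gives
`n = T_x + v² + z(z + 2k + 1)/2` for `z = w - k`.
The remaining `n < 85` are checked by computation.

Three squares: choose by Dirichlet a prime `p ≡ 1 (mod 4)` with `M ∣ p + 1`; quadratic
reciprocity makes `-M` a square mod `p`, which yields a positive definite integral ternary
form of determinant `1` representing `M`. Hermite's bound `3 E² ≤ 4 D` for binary forms lets one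
lower the leading coefficient of such a form by a unimodular change of variables until it is `1`,
and then split off a square; a positive binary form of determinant `1` reduces to `y² + z²`.
-/

open Matrix

lemma Int.exists_four_mul_sq_add_mul_le (a b : ℤ) (ha : 0 < a) :
    ∃ t : ℤ, 4 * (b + t * a) ^ 2 ≤ a ^ 2 := by
  have hdiv := Int.mul_ediv_add_emod b a
  have hlo := Int.emod_nonneg b ha.ne'
  have hhi := Int.emod_lt_of_pos b ha
  rcases le_or_gt (2 * (b % a)) a with h | h
  · exact ⟨-(b / a), by nlinarith⟩
  · exact ⟨-(b / a) - 1, by nlinarith⟩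

/-- `a y² + 2 b y z + c z²` -/
@[ext]
structure BinaryForm where
  a : ℤ
  b : ℤ
  c : ℤ

namespace BinaryForm

variable (Q : BinaryForm)

def eval (v : Fin 2 → ℤ) : ℤ := Q.a * v 0 ^ 2 + 2 * Q.b * v 0 * v 1 + Q.c * v 1 ^ 2

def polar (v w : Fin 2 → ℤ) : ℤ :=
  Q.a * v 0 * w 0 + Q.b * (v 0 * w 1 + v 1 * w 0) + Q.c * v 1 * w 1

def det : ℤ := Q.a * Q.c - Q.b ^ 2

def comp (P : Matrix (Fin 2) (Fin 2) ℤ) : BinaryForm :=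
  ⟨Q.eval (Pᵀ 0), Q.polar (Pᵀ 0) (Pᵀ 1), Q.eval (Pᵀ 1)⟩

theorem eval_comp (P : Matrix (Fin 2) (Fin 2) ℤ) (v : Fin 2 → ℤ) :
    (Q.comp P).eval v = Q.eval (P *ᵥ v) := by
  simp only [comp, eval, polar, mulVec, dotProduct, Fin.sum_univ_two, transpose_apply]
  ring

theorem det_comp (P : Matrix (Fin 2) (Fin 2) ℤ) : (Q.comp P).det = P.det ^ 2 * Q.det := by
  simp only [comp, det, eval, polar, det_fin_two, transpose_apply]
  ring

theorem comp_comp (P R : Matrix (Fin 2) (Fin 2) ℤ) : (Q.comp P).comp R = Q.comp (P * R) := by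
  ext <;> simp only [comp, eval, polar, mul_apply, Fin.sum_univ_two, transpose_apply] <;> ring

def IsReduced : Prop := 0 < Q.a ∧ 4 * Q.b ^ 2 ≤ Q.a ^ 2 ∧ Q.a ≤ Q.c

theorem exists_det_eq_one_isReduced_comp (ha : 0 < Q.a) (hdet : 0 < Q.det) :
    ∃ P, P.det = 1 ∧ (Q.comp P).IsReduced := by
  induction h : Q.a.toNat using Nat.strong_induction_on generalizing Q with
  | _ m ih =>
  obtain ⟨τ, hτ⟩ := Int.exists_four_mul_sq_add_mul_le Q.a Q.b ha
  set T : Matrix (Fin 2) (Fin 2) ℤ := !![1, τ; 0, 1]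
  have hT : Q.comp T = ⟨Q.a, Q.b + τ * Q.a, Q.a * τ ^ 2 + 2 * Q.b * τ + Q.c⟩ := by
    ext <;> simp only [T, comp, eval, polar, transpose_apply, of_apply, cons_val] <;> ring
  have hTdet : (Q.comp T).det = Q.det := by simp [det_comp, T]
  have hc : 0 < (Q.comp T).c := by
    rw [hT]; simp only [det] at hdet ⊢; nlinarith
  rcases le_or_gt Q.a (Q.comp T).c with hle | hlt
  · exact ⟨T, by simp [T], by rw [hT] at hle ⊢; exact ⟨ha, hτ, hle⟩⟩
  · set S : Matrix (Fin 2) (Fin 2) ℤ := !![0, -1; 1, 0]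
    have hS : (Q.comp T).comp S = ⟨(Q.comp T).c, -(Q.comp T).b, Q.a⟩ := by
      rw [hT]
      ext <;> simp only [S, comp, eval, polar, transpose_apply, of_apply, cons_val] <;> ring
    obtain ⟨R, hR, hred⟩ := ih ((Q.comp T).comp S).a.toNat (by rw [hS]; dsimp only; omega) _
      (by rw [hS]; exact hc) (by rw [det_comp, hTdet]; simpa [S] using hdet) rfl
    refine ⟨T * S * R, by rw [det_mul, det_mul, hR]; simp [T, S], ?_⟩
    rwa [← comp_comp, ← comp_comp]

theorem IsReduced.three_mul_sq_le {Q : BinaryForm} (h : Q.IsReduced) :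
    3 * Q.a ^ 2 ≤ 4 * Q.det := by
  obtain ⟨ha, hb, hc⟩ := h
  simp only [det]
  nlinarith

theorem exists_isCoprime_eval_pos_three_mul_sq_le (ha : 0 < Q.a) (hdet : 0 < Q.det) :
    ∃ v : Fin 2 → ℤ, IsCoprime (v 0) (v 1) ∧ 0 < Q.eval v ∧
      3 * Q.eval v ^ 2 ≤ 4 * Q.det := by
  obtain ⟨P, hP, hred⟩ := Q.exists_det_eq_one_isReduced_comp ha hdet
  refine ⟨Pᵀ 0, ⟨P 1 1, -P 0 1, ?_⟩, hred.1, ?_⟩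
  · rw [det_fin_two] at hP
    simp only [transpose_apply]
    linear_combination hP
  · have h3 := hred.three_mul_sq_le
    rwa [det_comp, hP, one_pow, one_mul] at h3

theorem exists_eval_eq_sq_add_sq (ha : 0 < Q.a) (hdet : Q.det = 1) (v : Fin 2 → ℤ) :
    ∃ r s, Q.eval v = r ^ 2 + s ^ 2 := by
  obtain ⟨P, hP, hred⟩ := Q.exists_det_eq_one_isReduced_comp ha (by rw [hdet]; exact one_pos)
  have hdet' : (Q.comp P).det = 1 := by rw [det_comp, hP, hdet]; norm_num
  have hone : Q.comp P = ⟨1, 0, 1⟩ := by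
    have h3 := hred.three_mul_sq_le
    obtain ⟨ha', hb', hc'⟩ := hred
    simp only [det] at hdet'
    have ha1 : (Q.comp P).a = 1 := by nlinarith
    have hb0 : (Q.comp P).b = 0 := by nlinarith
    ext <;> simp only [ha1, hb0]
    nlinarith
  obtain ⟨w, rfl⟩ := mulVec_surjective_iff_isUnit.mpr
    ((isUnit_iff_isUnit_det P).mpr (by rw [hP]; exact isUnit_one)) v
  exact ⟨w 0, w 1, by rw [← eval_comp, hone, eval]; ring⟩

end BinaryForm

/-- `a x² + b y² + c z² + 2 d y z + 2 e z x + 2 f x y` -/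
structure TernaryForm where
  a : ℤ
  b : ℤ
  c : ℤ
  d : ℤ
  e : ℤ
  f : ℤ

namespace TernaryForm

variable (Q : TernaryForm)

def eval (v : Fin 3 → ℤ) : ℤ :=
  Q.a * v 0 ^ 2 + Q.b * v 1 ^ 2 + Q.c * v 2 ^ 2 +
    2 * Q.d * v 1 * v 2 + 2 * Q.e * v 2 * v 0 + 2 * Q.f * v 0 * v 1

def polar (v w : Fin 3 → ℤ) : ℤ :=
  Q.a * v 0 * w 0 + Q.b * v 1 * w 1 + Q.c * v 2 * w 2 + Q.d * (v 1 * w 2 + v 2 * w 1) +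
    Q.e * (v 2 * w 0 + v 0 * w 2) + Q.f * (v 0 * w 1 + v 1 * w 0)

def det : ℤ :=
  Q.a * Q.b * Q.c + 2 * Q.d * Q.e * Q.f - Q.a * Q.d ^ 2 - Q.b * Q.e ^ 2 - Q.c * Q.f ^ 2

def PosDef : Prop := ∀ v, v ≠ 0 → 0 < Q.eval v

def comp (P : Matrix (Fin 3) (Fin 3) ℤ) : TernaryForm :=
  ⟨Q.eval (Pᵀ 0), Q.eval (Pᵀ 1), Q.eval (Pᵀ 2),
    Q.polar (Pᵀ 1) (Pᵀ 2), Q.polar (Pᵀ 2) (Pᵀ 0), Q.polar (Pᵀ 0) (Pᵀ 1)⟩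

theorem eval_comp (P : Matrix (Fin 3) (Fin 3) ℤ) (v : Fin 3 → ℤ) :
    (Q.comp P).eval v = Q.eval (P *ᵥ v) := by
  simp only [comp, eval, polar, mulVec, dotProduct, Fin.sum_univ_three, transpose_apply]
  ring

theorem det_comp (P : Matrix (Fin 3) (Fin 3) ℤ) : (Q.comp P).det = P.det ^ 2 * Q.det := by
  simp only [comp, det, eval, polar, det_fin_three, transpose_apply]
  ring

theorem PosDef.comp {Q : TernaryForm} (hQ : Q.PosDef) {P : Matrix (Fin 3) (Fin 3) ℤ}
    (hP : IsUnit P.det) : (Q.comp P).PosDef := by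
  intro v hv
  rw [eval_comp]
  refine hQ _ fun h ↦ hv (mulVec_injective_of_isUnit ((isUnit_iff_isUnit_det P).mpr hP) ?_)
  rw [h, mulVec_zero]

/-- `a` times the Schur complement of `a` in the matrix of `Q`. -/
def complement : BinaryForm := ⟨Q.a * Q.b - Q.f ^ 2, Q.a * Q.d - Q.e * Q.f, Q.a * Q.c - Q.e ^ 2⟩

theorem a_mul_eval (v : Fin 3 → ℤ) :
    Q.a * Q.eval v = (Q.a * v 0 + Q.f * v 1 + Q.e * v 2) ^ 2 + Q.complement.eval ![v 1, v 2] := by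
  simp only [eval, complement, BinaryForm.eval, Matrix.cons_val_zero, Matrix.cons_val_one]
  ring

theorem det_complement : Q.complement.det = Q.a * Q.det := by
  simp only [complement, BinaryForm.det, det]
  ring

theorem PosDef.a_pos {Q : TernaryForm} (hQ : Q.PosDef) : 0 < Q.a := by
  simpa [eval] using hQ ![1, 0, 0] (by simp)

theorem PosDef.complement_a_pos {Q : TernaryForm} (hQ : Q.PosDef) : 0 < Q.complement.a := by
  have hpos := hQ ![-Q.f, Q.a, 0] (by simp [hQ.a_pos.ne'])
  have key := Q.a_mul_eval ![-Q.f, Q.a, 0]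
  simp only [BinaryForm.eval, cons_val] at key
  have ha := hQ.a_pos
  nlinarith [mul_pos ha hpos]

theorem exists_isCoprime_eval_lt {Q : TernaryForm} (hQ : Q.PosDef) (hdet : Q.det = 1)
    (ha : 2 ≤ Q.a) : ∃ v : Fin 3 → ℤ, IsCoprime (v 1) (v 2) ∧ Q.eval v < Q.a := by
  have hBdet : Q.complement.det = Q.a := by rw [det_complement, hdet, mul_one]
  obtain ⟨w, hw, hE, hEle⟩ := Q.complement.exists_isCoprime_eval_pos_three_mul_sq_le
    hQ.complement_a_pos (by omega)
  rw [hBdet] at hEle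
  obtain ⟨x, hx⟩ := Int.exists_four_mul_sq_add_mul_le Q.a (Q.f * w 0 + Q.e * w 1) (by omega)
  refine ⟨![x, w 0, w 1], by simpa using hw, ?_⟩
  have hw' : w = ![w 0, w 1] := by ext i; fin_cases i <;> rfl
  rw [hw'] at hE hEle
  have key : Q.a * Q.eval ![x, w 0, w 1] =
      (Q.a * x + Q.f * w 0 + Q.e * w 1) ^ 2 + Q.complement.eval ![w 0, w 1] :=
    Q.a_mul_eval _
  -- `4 a q ≤ a² + 4 E` with `3 E² ≤ 4 a` forces `q < a` once `a ≥ 2`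
  by_contra! hq
  have h1 : 3 * Q.a ^ 2 ≤ 4 * Q.complement.eval ![w 0, w 1] := by
    nlinarith [mul_le_mul_of_nonneg_left hq (by omega : (0 : ℤ) ≤ Q.a)]
  have h2 : 9 * Q.a ^ 4 ≤ 64 * Q.a := by nlinarith
  nlinarith

theorem exists_det_eq_neg_one_transpose_zero {v : Fin 3 → ℤ} (hv : IsCoprime (v 1) (v 2)) :
    ∃ P : Matrix (Fin 3) (Fin 3) ℤ, P.det = -1 ∧ Pᵀ 0 = v := by
  obtain ⟨s, t, hst⟩ := hv
  refine ⟨!![v 0, 1, 0; v 1, 0, -t; v 2, 0, s], ?_, ?_⟩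
  · simp only [det_fin_three, of_apply, cons_val]
    linear_combination -hst
  · ext i; fin_cases i <;> rfl

theorem exists_eval_eq_sq_add_sq_add_sq {Q : TernaryForm} (hQ : Q.PosDef) (hdet : Q.det = 1)
    (v : Fin 3 → ℤ) : ∃ r s t, Q.eval v = r ^ 2 + s ^ 2 + t ^ 2 := by
  induction h : Q.a.toNat using Nat.strong_induction_on generalizing Q v with
  | _ m ih =>
  have ha := hQ.a_pos
  rcases (show 1 ≤ Q.a by omega).eq_or_lt with ha1 | ha2
  · obtain ⟨r, s, hrs⟩ := Q.complement.exists_eval_eq_sq_add_sq hQ.complement_a_pos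
      (by rw [det_complement, hdet, ← ha1, mul_one]) ![v 1, v 2]
    refine ⟨Q.a * v 0 + Q.f * v 1 + Q.e * v 2, r, s, ?_⟩
    linear_combination Q.a_mul_eval v + hrs + Q.eval v * ha1
  · obtain ⟨v₀, hv₀, hlt⟩ := exists_isCoprime_eval_lt hQ hdet ha2
    obtain ⟨P, hP, hPv₀⟩ := exists_det_eq_neg_one_transpose_zero hv₀
    have hPunit : IsUnit P.det := by rw [hP]; exact isUnit_one.neg
    have hQP : (Q.comp P).a = Q.eval v₀ := by rw [← hPv₀]; rfl
    obtain ⟨w, rfl⟩ := mulVec_surjective_iff_isUnit.mpr ((isUnit_iff_isUnit_det P).mpr hPunit) v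
    rw [← eval_comp]
    exact ih _ (by omega) (hQ.comp hPunit) (by rw [det_comp, hP, hdet]; norm_num) w rfl

end TernaryForm

theorem Nat.exists_prime_mod_four_eq_one_dvd_add_one {M : ℕ} (hM : M % 4 = 1) :
    ∃ p, p.Prime ∧ p % 4 = 1 ∧ M ∣ p + 1 := by
  have : NeZero (4 * M) := ⟨by omega⟩
  -- `2M - 1` is its own inverse modulo `4M`
  have hunit : IsUnit (2 * M - 1 : ZMod (4 * M)) := by
    refine IsUnit.of_mul_eq_one (2 * M - 1 : ZMod (4 * M)) ?_
    have h0 : ((4 * M : ℕ) : ZMod (4 * M)) = 0 := ZMod.natCast_self _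
    push_cast at h0
    linear_combination (M - 1 : ZMod (4 * M)) * h0
  obtain ⟨p, -, hp, hpM⟩ := Nat.forall_exists_prime_gt_and_eq_mod hunit 0
  have hmod : (p + 1) % (4 * M) = (2 * M) % (4 * M) := by
    rw [← ZMod.natCast_eq_natCast_iff']
    push_cast
    rw [hpM]
    ring
  rw [Nat.mod_eq_of_lt (show 2 * M < 4 * M by omega)] at hmod
  have hdiv := Nat.div_add_mod (p + 1) (4 * M)
  set q := (p + 1) / (4 * M)
  have hpq : p + 1 = 4 * (M * q) + 2 * M := by rw [← mul_assoc, ← hmod, hdiv]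
  exact ⟨p, hp, by omega, ⟨4 * q + 2, by rw [hpq]; ring⟩⟩

theorem Nat.exists_dvd_mul_sq_add_one {M p : ℕ} [Fact p.Prime] (hM : M % 4 = 1)
    (hp : p % 4 = 1) (hMp : M ∣ p + 1) : ∃ b : ℤ, (p : ℤ) ∣ M * b ^ 2 + 1 := by
  have hpM : ¬p ∣ M := fun h ↦
    (Fact.out : p.Prime).one_lt.ne' (Nat.dvd_one.mp ((Nat.dvd_add_right dvd_rfl).mp (h.trans hMp)))
  have hp_odd : Odd p := Nat.odd_iff.mpr (by omega)
  have hM_odd : Odd M := Nat.odd_iff.mpr (by omega)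
  have hpmod : (p : ℤ) ≡ -1 [ZMOD M] := by
    obtain ⟨j, hj⟩ := hMp
    have hj' : (p : ℤ) + 1 = M * j := by exact_mod_cast hj
    exact Int.modEq_iff_dvd.mpr ⟨-j, by linear_combination -hj'⟩
  have hJ : jacobiSym (-M) p = 1 := by
    rw [jacobiSym.neg _ hp_odd, ZMod.χ₄_nat_one_mod_four hp, one_mul,
      jacobiSym.quadratic_reciprocity_one_mod_four hM hp_odd, jacobiSym.mod_left' hpmod,
      jacobiSym.at_neg_one hM_odd, ZMod.χ₄_nat_one_mod_four hM]
  obtain ⟨c, hc⟩ := ZMod.isSquare_of_jacobiSym_eq_one hJ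
  have hc0 : c ≠ 0 := by
    rintro rfl
    apply hpM
    rw [← ZMod.natCast_eq_zero_iff]
    push_cast at hc
    linear_combination -hc
  obtain ⟨b, hb⟩ := ZMod.intCast_surjective c⁻¹
  refine ⟨b, (ZMod.intCast_zmod_eq_zero_iff_dvd _ p).mp ?_⟩
  push_cast at hc ⊢
  rw [hb]
  field_simp
  linear_combination -hc

theorem TernaryForm.exists_posDef_det_eq_one_a_eq {M : ℕ} (hM : M % 4 = 1) :
    ∃ Q : TernaryForm, Q.PosDef ∧ Q.det = 1 ∧ Q.a = M := by
  obtain ⟨p, hp, hp4, ⟨γ, hγ⟩⟩ := Nat.exists_prime_mod_four_eq_one_dvd_add_one hM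
  have : Fact p.Prime := ⟨hp⟩
  obtain ⟨b, g, hg⟩ := Nat.exists_dvd_mul_sq_add_one hM hp4 ⟨γ, hγ⟩
  have hγ' : (p : ℤ) + 1 = M * γ := by exact_mod_cast hγ
  have hM0 : (0 : ℤ) < M := by omega
  have hp0 : (0 : ℤ) < p := by exact_mod_cast hp.pos
  refine ⟨⟨M, γ, g, -b, 0, 1⟩, fun v hv ↦ ?_,
    by simp only [det]; linear_combination (-g) * hγ' - hg, rfl⟩
  have key : (M * p : ℤ) * (⟨M, γ, g, -b, 0, 1⟩ : TernaryForm).eval v =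
      p * (M * v 0 + v 1) ^ 2 + (p * v 1 - M * b * v 2) ^ 2 + M * v 2 ^ 2 := by
    simp only [eval]
    linear_combination (-(p : ℤ) * v 1 ^ 2) * hγ' + - (M * v 2 ^ 2) * hg
  have hpos : 0 < p * (M * v 0 + v 1) ^ 2 + (p * v 1 - M * b * v 2) ^ 2 + M * v 2 ^ 2 := by
    by_cases h2 : v 2 = 0
    · by_cases h1 : v 1 = 0
      · have h0 : v 0 ≠ 0 := fun h0 ↦ hv (by ext i; fin_cases i <;> assumption)
        simp only [h1, h2, add_zero, mul_zero, sub_self, ne_eq, OfNat.ofNat_ne_zero,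
          not_false_eq_true, zero_pow]
        positivity
      · simp only [h2, mul_zero, sub_zero, ne_eq, OfNat.ofNat_ne_zero, not_false_eq_true, zero_pow,
          add_zero]
        positivity
    · positivity
  exact pos_of_mul_pos_right (key ▸ hpos) (by positivity)

theorem Nat.exists_sq_add_sq_add_sq_of_mod_four_eq_one {M : ℕ} (hM : M % 4 = 1) :
    ∃ r s t : ℤ, (M : ℤ) = r ^ 2 + s ^ 2 + t ^ 2 := by
  obtain ⟨Q, hQ, hdet, ha⟩ := TernaryForm.exists_posDef_det_eq_one_a_eq hM
  obtain ⟨r, s, t, h⟩ := TernaryForm.exists_eval_eq_sq_add_sq_add_sq hQ hdet ![1, 0, 0]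
  exact ⟨r, s, t, by simpa [TernaryForm.eval, ha] using h⟩

theorem Int.exists_eq_odd_sq_add_four_mul_sq_add_four_mul_sq {r s t : ℤ}
    (h : (r ^ 2 + s ^ 2 + t ^ 2) % 4 = 1) :
    ∃ i u v : ℤ, r ^ 2 + s ^ 2 + t ^ 2 = (2 * i + 1) ^ 2 + 4 * u ^ 2 + 4 * v ^ 2 := by
  rcases Int.even_or_odd' r with ⟨a, rfl | rfl⟩ <;>
    rcases Int.even_or_odd' s with ⟨b, rfl | rfl⟩ <;>
    rcases Int.even_or_odd' t with ⟨c, rfl | rfl⟩ <;>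
    first
    | (refine ⟨a, b, c, ?_⟩; ring1)
    | (refine ⟨b, a, c, ?_⟩; ring1)
    | (refine ⟨c, a, b, ?_⟩; ring1)
    | (ring_nf at h; omega)

theorem Int.exists_natCast_mul_add_one (m : ℤ) :
    ∃ x : ℕ, (x : ℤ) * (x + 1) = m * (m + 1) := by
  rcases le_or_gt 0 m with hm | hm
  · exact ⟨m.toNat, by rw [Int.toNat_of_nonneg hm]⟩
  · exact ⟨(-m - 1).toNat, by rw [Int.toNat_of_nonneg (by omega)]; ring⟩

theorem Nat.exists_eq_triangular_add_triangular_add_sq (N : ℕ) :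
    ∃ w x v : ℕ, w * (w + 1) + x * (x + 1) + 2 * v ^ 2 = 2 * N ∧
      4 * N + 1 ≤ 2 * (2 * w + 1) ^ 2 := by
  obtain ⟨r, s, t, h⟩ :=
    Nat.exists_sq_add_sq_add_sq_of_mod_four_eq_one (M := 4 * N + 1) (by omega)
  obtain ⟨i, u, v, h'⟩ :=
    Int.exists_eq_odd_sq_add_four_mul_sq_add_four_mul_sq (r := r) (by rw [← h]; omega)
  obtain ⟨i', hi'⟩ := Int.exists_natCast_mul_add_one i
  obtain ⟨U, V, hVU, hUV⟩ :
      ∃ U V : ℕ, V ≤ U ∧ (U : ℤ) ^ 2 + V ^ 2 = u ^ 2 + v ^ 2 := by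
    rcases le_total u.natAbs v.natAbs with huv | huv
    · exact ⟨v.natAbs, u.natAbs, huv, by simp only [Int.natCast_natAbs, sq_abs]; ring⟩
    · exact ⟨u.natAbs, v.natAbs, huv, by simp only [Int.natCast_natAbs, sq_abs]⟩
  -- `2 (o² + 4U²) = (o + 2U)² + (o - 2U)²` with `o = 2i' + 1`
  obtain ⟨x, hx⟩ := Int.exists_natCast_mul_add_one ((i' : ℤ) - U)
  have hVU' : (V : ℤ) ^ 2 ≤ (U : ℤ) ^ 2 := by gcongr
  refine ⟨i' + U, x, V, ?_, ?_⟩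
  · zify
    push_cast at h
    linarith
  · zify
    push_cast at h
    nlinarith [h, h', hi', hUV]

theorem Nat.eq_div_two_add_sq_add_div_two {n x y z k : ℕ}
    (h : 2 * n = x * (x + 1) + 2 * y ^ 2 + z * (z + 2 * k + 1)) :
    n = x * (x + 1) / 2 + y ^ 2 + z * (z + 2 * k + 1) / 2 := by
  obtain ⟨X, hX⟩ := Nat.even_mul_succ_self x
  obtain ⟨Z, hZ⟩ : Even (z * (z + 2 * k + 1)) := by
    have : z * (z + 2 * k + 1) = z * (z + 1) + 2 * (k * z) := by ring
    rw [this]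
    exact (Nat.even_mul_succ_self z).add (even_two_mul _)
  rw [hX, hZ] at h ⊢
  omega

theorem exists_triangular_add_sq_add_of_le {k n : ℕ} (h : 6 * k ^ 2 + 6 * k + 1 ≤ 4 * n) :
    ∃ x y z : ℕ, n = x * (x + 1) / 2 + y ^ 2 + z * (z + 2 * k + 1) / 2 := by
  obtain ⟨K, hK⟩ := Nat.even_mul_succ_self k
  obtain ⟨w, x, v, hsum, hw⟩ := Nat.exists_eq_triangular_add_triangular_add_sq (n + K)
  have hkw : k ≤ w := by
    have : (2 * k + 1) ^ 2 ≤ (2 * w + 1) ^ 2 := by nlinarith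
    have := (Nat.pow_le_pow_iff_left two_ne_zero).mp this
    omega
  obtain ⟨z, rfl⟩ := Nat.exists_eq_add_of_le hkw
  refine ⟨x, v, z, Nat.eq_div_two_add_sq_add_div_two ?_⟩
  -- `T_{k+z} = T_k + z (z + 2k + 1) / 2`
  nlinarith

theorem exists_triangular_add_sq_add_of_lt :
    ∀ k < 8, ∀ n < 85, ∃ x < 13, ∃ y < 10, ∃ z < 13,
      n = x * (x + 1) / 2 + y ^ 2 + z * (z + 2 * k + 1) / 2 := by
  decide +kernel

theorem stmt_10 : ∀ k ∈ ({1, 2, 3, 4, 5, 6, 7} : Set ℕ), ∀ n : ℕ, ∃ x y z : ℕ,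
    n = x * (x + 1) / 2 + y ^ 2 + z * (z + 2 * k + 1) / 2 := by
  intro k hk n
  have hk7 : k ≤ 7 := by
    simp only [Set.mem_insert_iff, Set.mem_singleton_iff] at hk
    omega
  rcases lt_or_ge n 85 with hn | hn
  · obtain ⟨x, -, y, -, z, -, h⟩ := exists_triangular_add_sq_add_of_lt k (by omega) n hn
    exact ⟨x, y, z, h⟩
  · exact exists_triangular_add_sq_add_of_le (by nlinarith)
end

section
/- Every positive integer n can be written as x² + T_y + T_z with x, y, z ∈ ℕ and x ≥ 1; that is, every positive integer is the sum of a positive square and two triangular numbers. -/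
/-!
Since `8 T_y + 1 = (2y + 1)²`, it suffices to write `4n + 1 = s² + t² + u²` with `s` even and
nonzero: then `t + u = 2y + 1`, `t - u = 2z + 1` for integers `y, z`, and
`n = (s/2)² + T_y + T_z` (with `T_y = T_{-1-y}` for negative `y`). In any such representation
exactly one of the three terms is odd, and if the representation is primitive the two even terms
cannot both vanish unless `4n + 1 = 1`.

Primitive representations of `m ≡ 1 (mod 4)` come from Gauss's argument. By Dirichlet's theorem
there is a prime `p ≡ 2m - 1 (mod 4m)`; then `D = (p + 1)/m` is an integer, quadratic reciprocity
makes `-D` a square mod `p`, say `b² + D = p c`, and `[[m, 0, 1], [0, p, b], [1, b, c]]` is a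
positive definite integral ternary form of determinant `m D - p = 1`. Every such form is the Gram
matrix `Vᵀ V` of a unimodular `V`: moving a minimal vector to the first basis vector, the adjoint
binary form of determinant `μ` has minimum at least `3μ²/4`, and Hermite's bound
`3 min² ≤ 4 det` for binary forms forces `μ = 1`; the binary form of determinant `1` left over is
`Wᵀ W` for the same reason. Then `m` is the squared length of the first column of `V`, which is
primitive.
-/

open Matrix
open scoped NumberTheorySymbols

def IsPrimitiveVector {n : Type*} (v : n → ℤ) : Prop := ∀ d : ℤ, (∀ i, d ∣ v i) → IsUnit d

lemma Int.exists_isCoprime_mul_s12 (y z : ℤ) :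
    ∃ g y' z' : ℤ, IsCoprime y' z' ∧ y = g * y' ∧ z = g * z' := by
  by_cases h : Int.gcd y z = 0
  · obtain ⟨rfl, rfl⟩ := Int.gcd_eq_zero_iff.mp h
    exact ⟨0, 1, 0, isCoprime_one_left, by simp, by simp⟩
  · obtain ⟨y', z', hg, hy, hz⟩ := Int.exists_gcd_one (Nat.pos_of_ne_zero h)
    exact ⟨_, y', z', Int.isCoprime_iff_gcd_eq_one.mpr hg, hy.trans (mul_comm _ _),
      hz.trans (mul_comm _ _)⟩

lemma IsPrimitiveVector.exists_det_eq_one_col_eq_fin_two {v : Fin 2 → ℤ}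
    (hv : IsPrimitiveVector v) : ∃ P : Matrix (Fin 2) (Fin 2) ℤ, P.det = 1 ∧ ∀ i, P i 0 = v i := by
  obtain ⟨a, b, hab⟩ := isRelPrime_iff_isCoprime.mp fun d h0 h1 =>
    hv d (Fin.forall_fin_two.mpr ⟨h0, h1⟩)
  refine ⟨!![v 0, -b; v 1, a], by simp [det_fin_two]; linarith, Fin.forall_fin_two.mpr ?_⟩
  simp

lemma IsPrimitiveVector.exists_det_eq_one_col_eq_fin_three {v : Fin 3 → ℤ}
    (hv : IsPrimitiveVector v) : ∃ P : Matrix (Fin 3) (Fin 3) ℤ, P.det = 1 ∧ ∀ i, P i 0 = v i := by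
  obtain ⟨g, y, z, ⟨a, b, hab⟩, hy, hz⟩ := Int.exists_isCoprime_mul_s12 (v 1) (v 2)
  obtain ⟨c, d, hcd⟩ := isRelPrime_iff_isCoprime.mp fun (e : ℤ) (h0 : e ∣ v 0) (hg : e ∣ g) =>
    hv e (Fin.forall_fin_succ.mpr ⟨h0, Fin.forall_fin_two.mpr
      ⟨hy ▸ hg.mul_right y, hz ▸ hg.mul_right z⟩⟩)
  refine ⟨!![v 0, 0, -d; v 1, b, c * y; v 2, -a, c * z], ?_, ?_⟩
  · simp [det_fin_three, hy, hz]
    linear_combination (v 0 * c + g * d) * hab + hcd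
  · intro i; fin_cases i <;> simp

lemma Int.exists_four_mul_sq_add_le (w : ℤ) {μ : ℤ} (hμ : 0 < μ) :
    ∃ x, 4 * (μ * x + w) ^ 2 ≤ μ ^ 2 := by
  have h := Int.emod_add_mul_ediv w μ
  have h0 := Int.emod_nonneg w hμ.ne'
  have h1 := Int.emod_lt_of_pos w hμ
  by_cases hc : 2 * (w % μ) ≤ μ
  · exact ⟨-(w / μ), by nlinarith⟩
  · exact ⟨-(w / μ) - 1, by nlinarith⟩

namespace Matrix

section General

variable {n : Type*} [Fintype n]

lemma dotProduct_transpose_mul_mul_mulVec {R : Type*} [CommSemiring R] (A P : Matrix n n R)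
    (v : n → R) : v ⬝ᵥ (Pᵀ * A * P) *ᵥ v = (P *ᵥ v) ⬝ᵥ A *ᵥ (P *ᵥ v) := by
  simp only [← mulVec_mulVec, dotProduct_mulVec, vecMul_transpose]

lemma det_transpose_mul_mul {R : Type*} [CommRing R] [DecidableEq n] (A : Matrix n n R)
    {P : Matrix n n R} (hP : P.det = 1) : (Pᵀ * A * P).det = A.det := by
  simp [hP]

lemma injective_mulVec_of_det_eq_one [DecidableEq n] {P : Matrix n n ℤ} (hP : P.det = 1) :
    Function.Injective P.mulVec :=
  mulVec_injective_of_isUnit ((isUnit_iff_isUnit_det _).mpr (by simp [hP]))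

lemma isPrimitiveVector_col_of_det_eq_one [DecidableEq n] {P : Matrix n n ℤ} (hP : P.det = 1)
    (j : n) : IsPrimitiveVector fun i => P i j := by
  intro d hd
  have h := congrFun (congrFun (adjugate_mul P) j) j
  simp only [smul_apply, one_apply_eq, smul_eq_mul, mul_one, mul_apply, hP] at h
  exact isUnit_of_dvd_one (h ▸ Finset.dvd_sum fun i _ => dvd_mul_of_dvd_right (hd i) _)

lemma exists_eq_transpose_mul_self_of_transpose_mul_mul [DecidableEq n] {A P U : Matrix n n ℤ}
    (hP : P.det = 1) (hU : U.det = 1) (h : Pᵀ * A * P = Uᵀ * U) :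
    ∃ V : Matrix n n ℤ, V.det = 1 ∧ A = Vᵀ * V := by
  have hPinv : P * P⁻¹ = 1 := mul_nonsing_inv _ (by simp [hP])
  refine ⟨U * P⁻¹, by simp [hU, hP], ?_⟩
  calc A = (P * P⁻¹)ᵀ * A * (P * P⁻¹) := by simp [hPinv]
    _ = (P⁻¹)ᵀ * (Pᵀ * A * P) * P⁻¹ := by simp only [transpose_mul, Matrix.mul_assoc]
    _ = (U * P⁻¹)ᵀ * (U * P⁻¹) := by rw [h]; simp only [transpose_mul, Matrix.mul_assoc]

variable {A : Matrix n n ℤ}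

lemma posDef_iff_dotProduct_mulVec_int :
    A.PosDef ↔ A.IsSymm ∧ ∀ ⦃v⦄, v ≠ 0 → 0 < v ⬝ᵥ A *ᵥ v := by
  simp [posDef_iff_dotProduct_mulVec, IsHermitian, IsSymm]

lemma PosDef.isSymm (hA : A.PosDef) : A.IsSymm :=
  (posDef_iff_dotProduct_mulVec_int.mp hA).1

lemma PosDef.dotProduct_mulVec_pos_int (hA : A.PosDef) {v : n → ℤ} (hv : v ≠ 0) :
    0 < v ⬝ᵥ A *ᵥ v :=
  (posDef_iff_dotProduct_mulVec_int.mp hA).2 hv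

lemma PosDef.transpose_mul_mul [DecidableEq n] (hA : A.PosDef) {P : Matrix n n ℤ}
    (hP : P.det = 1) : (Pᵀ * A * P).PosDef := by
  simpa [conjTranspose_eq_transpose_of_trivial] using
    hA.conjTranspose_mul_mul_same (injective_mulVec_of_det_eq_one hP)

lemma PosDef.exists_forall_le [Nonempty n] (hA : A.PosDef) :
    ∃ v ≠ 0, ∀ w ≠ 0, v ⬝ᵥ A *ᵥ v ≤ w ⬝ᵥ A *ᵥ w := by
  classical
  obtain ⟨μ, ⟨v, hv, rfl⟩, hμ⟩ :=
    Int.exists_least_of_bdd (P := fun k => ∃ v ≠ 0, v ⬝ᵥ A *ᵥ v = k)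
      ⟨0, fun _ ⟨_, hv, hk⟩ => hk ▸ (hA.dotProduct_mulVec_pos_int hv).le⟩
      ⟨_, Pi.single (Classical.arbitrary n) 1, by simp, rfl⟩
  exact ⟨v, hv, fun w hw => hμ _ ⟨w, hw, rfl⟩⟩

lemma PosDef.isPrimitiveVector_of_forall_le (hA : A.PosDef) {v : n → ℤ} (hv : v ≠ 0)
    (hmin : ∀ w ≠ 0, v ⬝ᵥ A *ᵥ v ≤ w ⬝ᵥ A *ᵥ w) : IsPrimitiveVector v := by
  intro d hd
  choose w hw using hd
  have hvw : v = d • w := funext hw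
  have hw0 : w ≠ 0 := by rintro rfl; simp [hvw] at hv
  have hd0 : d ≠ 0 := by rintro rfl; simp [hvw] at hv
  have hQ : v ⬝ᵥ A *ᵥ v = d ^ 2 * (w ⬝ᵥ A *ᵥ w) := by
    simp only [hvw, mulVec_smul, dotProduct_smul, smul_dotProduct, smul_eq_mul]; ring
  have hpos := hA.dotProduct_mulVec_pos_int hw0
  have hd1 : d ^ 2 ≤ 1 := by nlinarith [hmin w hw0]
  have : d ≤ 1 := by nlinarith
  have : -1 ≤ d := by nlinarith
  exact Int.isUnit_iff.mpr (by omega)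

lemma PosDef.exists_transpose_mul_mul_apply_le [DecidableEq n] (hA : A.PosDef) (j : n)
    (hcompl : ∀ v : n → ℤ, IsPrimitiveVector v →
      ∃ P : Matrix n n ℤ, P.det = 1 ∧ ∀ i, P i j = v i) :
    ∃ P : Matrix n n ℤ, P.det = 1 ∧ ∀ w ≠ 0, (Pᵀ * A * P) j j ≤ w ⬝ᵥ (Pᵀ * A * P) *ᵥ w := by
  have : Nonempty n := ⟨j⟩
  obtain ⟨v, hv, hmin⟩ := hA.exists_forall_le
  obtain ⟨P, hdet, hP⟩ := hcompl v (hA.isPrimitiveVector_of_forall_le hv hmin)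
  have hPv : P *ᵥ Pi.single j 1 = v := by
    ext i; simp [hP]
  refine ⟨P, hdet, fun w hw => ?_⟩
  have hPw : P *ᵥ w ≠ 0 := fun h => hw <|
    injective_mulVec_of_det_eq_one hdet (h.trans (mulVec_zero _).symm)
  have := hmin _ hPw
  rwa [← hPv, ← dotProduct_transpose_mul_mul_mulVec, ← dotProduct_transpose_mul_mul_mulVec,
    mulVec_single_one, single_one_dotProduct] at this

end General

section Binary

variable {A : Matrix (Fin 2) (Fin 2) ℤ}

lemma PosDef.exists_reduced_fin_two (hA : A.PosDef) :
    ∃ P : Matrix (Fin 2) (Fin 2) ℤ, P.det = 1 ∧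
      (Pᵀ * A * P) 0 0 ≤ (Pᵀ * A * P) 1 1 ∧ 4 * (Pᵀ * A * P) 0 1 ^ 2 ≤ (Pᵀ * A * P) 0 0 ^ 2 := by
  obtain ⟨P, hP, hmin⟩ := hA.exists_transpose_mul_mul_apply_le 0
    fun _ hv => hv.exists_det_eq_one_col_eq_fin_two
  have hB := hA.transpose_mul_mul hP
  set B := Pᵀ * A * P
  obtain ⟨k, hk⟩ := Int.exists_four_mul_sq_add_le (B 0 1) (hB.diag_pos (i := 0))
  set S : Matrix (Fin 2) (Fin 2) ℤ := !![1, k; 0, 1]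
  have hC : (P * S)ᵀ * A * (P * S) = !![B 0 0, B 0 0 * k + B 0 1;
      B 0 0 * k + B 0 1, ![k, 1] ⬝ᵥ B *ᵥ ![k, 1]] := by
    rw [show (P * S)ᵀ * A * (P * S) = Sᵀ * B * S by simp only [B, transpose_mul, Matrix.mul_assoc]]
    ext i j
    fin_cases i <;> fin_cases j <;>
      simp [S, mul_apply, Fin.sum_univ_two, dotProduct, mulVec, hB.isSymm.apply 0 1] <;> ring
  refine ⟨P * S, by simp [S, hP, det_fin_two], ?_⟩
  rw [hC]
  exact ⟨hmin ![k, 1] (by simp), hk⟩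

lemma PosDef.exists_three_mul_sq_le_four_mul_det (hA : A.PosDef) :
    ∃ v ≠ 0, 3 * (v ⬝ᵥ A *ᵥ v) ^ 2 ≤ 4 * A.det := by
  obtain ⟨P, hP, hle, hred⟩ := hA.exists_reduced_fin_two
  have hB := hA.transpose_mul_mul hP
  have hdet := det_transpose_mul_mul A hP
  set B := Pᵀ * A * P
  refine ⟨P *ᵥ Pi.single 0 1, fun h => ?_, ?_⟩
  · simpa using injective_mulVec_of_det_eq_one hP (h.trans (mulVec_zero _).symm)
  · rw [← dotProduct_transpose_mul_mul_mulVec, mulVec_single_one, single_one_dotProduct,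
      col_apply, ← hdet, det_fin_two, hB.isSymm.apply 0 1]
    have := hB.diag_pos (i := 0)
    nlinarith

lemma PosDef.exists_eq_transpose_mul_self_fin_two (hA : A.PosDef) (hdet : A.det = 1) :
    ∃ V : Matrix (Fin 2) (Fin 2) ℤ, V.det = 1 ∧ A = Vᵀ * V := by
  obtain ⟨P, hP, hle, hred⟩ := hA.exists_reduced_fin_two
  have hB := hA.transpose_mul_mul hP
  have hBdet := det_transpose_mul_mul A hP
  set B := Pᵀ * A * P
  have h10 : B 1 0 = B 0 1 := hB.isSymm.apply 0 1
  rw [hdet, det_fin_two, h10] at hBdet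
  have hpos := hB.diag_pos (i := 0)
  have h00 : B 0 0 = 1 := by nlinarith
  have h01 : B 0 1 = 0 := by nlinarith
  have h11 : B 1 1 = 1 := by nlinarith
  refine exists_eq_transpose_mul_self_of_transpose_mul_mul hP (det_one (n := Fin 2)) ?_
  change B = _
  ext i j
  fin_cases i <;> fin_cases j <;> simp [h00, h01, h10, h11]

end Binary

section Ternary

variable {B : Matrix (Fin 3) (Fin 3) ℤ}

/-- `B 0 0` times the Schur complement of the entry `B 0 0` (Gauss's adjoint binary form). -/
def schurComplScaled (B : Matrix (Fin 3) (Fin 3) ℤ) : Matrix (Fin 2) (Fin 2) ℤ :=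
  of fun i j => B 0 0 * B i.succ j.succ - B 0 i.succ * B 0 j.succ

lemma IsSymm.mul_dotProduct_mulVec_eq (hB : B.IsSymm) (x : ℤ) (w : Fin 2 → ℤ) :
    B 0 0 * (![x, w 0, w 1] ⬝ᵥ B *ᵥ ![x, w 0, w 1])
      = (B 0 0 * x + B 0 1 * w 0 + B 0 2 * w 1) ^ 2 + w ⬝ᵥ schurComplScaled B *ᵥ w := by
  simp [dotProduct, mulVec, Fin.sum_univ_succ, schurComplScaled, hB.apply 0 1, hB.apply 0 2,
    hB.apply 1 2]
  ring

lemma IsSymm.det_schurComplScaled (hB : B.IsSymm) :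
    (schurComplScaled B).det = B 0 0 * B.det := by
  simp [det_fin_two, det_fin_three, schurComplScaled, hB.apply 0 1, hB.apply 0 2, hB.apply 1 2]
  ring

lemma PosDef.posDef_schurComplScaled (hB : B.PosDef) : B.schurComplScaled.PosDef := by
  refine posDef_iff_dotProduct_mulVec_int.mpr ⟨?_, fun w hw => ?_⟩
  · ext i j
    simp [schurComplScaled, hB.isSymm.apply, mul_comm]
  · have hμ := hB.diag_pos (i := 0)
    have hv : ![-(B 0 1 * w 0 + B 0 2 * w 1), B 0 0 * w 0, B 0 0 * w 1] ≠ 0 := fun h => hw <| by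
      have h1 := congrFun h 1
      have h2 := congrFun h 2
      simp [hμ.ne'] at h1 h2
      ext i; fin_cases i <;> simp [h1, h2]
    have hexp := hB.isSymm.mul_dotProduct_mulVec_eq (-(B 0 1 * w 0 + B 0 2 * w 1)) (B 0 0 • w)
    simp only [Pi.smul_apply, smul_eq_mul, mulVec_smul, dotProduct_smul, smul_dotProduct] at hexp
    rw [show B 0 0 * -(B 0 1 * w 0 + B 0 2 * w 1) + B 0 1 * (B 0 0 * w 0)
      + B 0 2 * (B 0 0 * w 1) = 0 by ring] at hexp
    have h := mul_pos hμ (hB.dotProduct_mulVec_pos_int hv)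
    rw [hexp, zero_pow two_ne_zero, zero_add] at h
    exact pos_of_mul_pos_right (pos_of_mul_pos_right h hμ.le) hμ.le

lemma PosDef.apply_zero_zero_eq_one (hB : B.PosDef) (hdet : B.det = 1)
    (hmin : ∀ w ≠ 0, B 0 0 ≤ w ⬝ᵥ B *ᵥ w) : B 0 0 = 1 := by
  have hμ := hB.diag_pos (i := 0)
  -- round `x` so that the square in `IsSymm.mul_dotProduct_mulVec_eq` is at most `(B 0 0)² / 4`
  have hlow : ∀ w ≠ 0, 3 * B 0 0 ^ 2 ≤ 4 * (w ⬝ᵥ B.schurComplScaled *ᵥ w) := by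
    intro w hw
    obtain ⟨x, hx⟩ := Int.exists_four_mul_sq_add_le (B 0 1 * w 0 + B 0 2 * w 1) hμ
    have hv : ![x, w 0, w 1] ≠ 0 := fun h => hw <| by
      ext i; fin_cases i
      exacts [congrFun h 1, congrFun h 2]
    have hexp := hB.isSymm.mul_dotProduct_mulVec_eq x w
    nlinarith [hmin _ hv]
  obtain ⟨w, hw, hherm⟩ := hB.posDef_schurComplScaled.exists_three_mul_sq_le_four_mul_det
  rw [hB.isSymm.det_schurComplScaled, hdet, mul_one] at hherm
  have hw' := hlow w hw
  have : B 0 0 ^ 3 < 3 := by nlinarith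
  nlinarith

lemma PosDef.exists_eq_transpose_mul_self_of_apply_zero_zero_eq_one (hB : B.PosDef)
    (hdet : B.det = 1) (h00 : B 0 0 = 1) :
    ∃ U : Matrix (Fin 3) (Fin 3) ℤ, U.det = 1 ∧ B = Uᵀ * U := by
  have hNdet : B.schurComplScaled.det = 1 := by
    rw [hB.isSymm.det_schurComplScaled, hdet, h00, mul_one]
  obtain ⟨V, hV, hBV⟩ := hB.posDef_schurComplScaled.exists_eq_transpose_mul_self_fin_two hNdet
  refine ⟨!![1, B 0 1, B 0 2; 0, V 0 0, V 0 1; 0, V 1 0, V 1 1], ?_, ?_⟩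
  · simpa [det_fin_three, det_fin_two] using hV
  · rw [← Matrix.ext_iff] at hBV
    simp [Fin.forall_fin_two, schurComplScaled, mul_apply, Fin.sum_univ_two, h00] at hBV
    obtain ⟨⟨h11, h12⟩, h21, h22⟩ := hBV
    ext i j
    fin_cases i <;> fin_cases j <;>
      simp [mul_apply, Fin.sum_univ_three, h00, hB.isSymm.apply 0 1, hB.isSymm.apply 0 2] <;>
      linarith

theorem PosDef.exists_eq_transpose_mul_self_fin_three {A : Matrix (Fin 3) (Fin 3) ℤ}
    (hA : A.PosDef) (hdet : A.det = 1) :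
    ∃ V : Matrix (Fin 3) (Fin 3) ℤ, V.det = 1 ∧ A = Vᵀ * V := by
  obtain ⟨P, hP, hmin⟩ := hA.exists_transpose_mul_mul_apply_le 0
    fun _ hv => hv.exists_det_eq_one_col_eq_fin_three
  have hB := hA.transpose_mul_mul hP
  have hBdet : (Pᵀ * A * P).det = 1 := (det_transpose_mul_mul A hP).trans hdet
  obtain ⟨U, hU, hBU⟩ := hB.exists_eq_transpose_mul_self_of_apply_zero_zero_eq_one hBdet
    (hB.apply_zero_zero_eq_one hBdet hmin)
  exact exists_eq_transpose_mul_self_of_transpose_mul_mul hP hU hBU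

end Ternary

lemma posDef_of_mul_sub_sq_eq {m a b c : ℤ} (hm : 0 < m) (ha : 0 < a)
    (h : m * (a * c - b ^ 2) = a + 1) : (!![m, 0, 1; 0, a, b; 1, b, c]).PosDef := by
  refine posDef_iff_dotProduct_mulVec_int.mpr ⟨?_, fun v hv => ?_⟩
  · ext i j; fin_cases i <;> fin_cases j <;> rfl
  · have hid : a * m * (v ⬝ᵥ !![m, 0, 1; 0, a, b; 1, b, c] *ᵥ v)
        = a * (m * v 0 + v 2) ^ 2 + m * (a * v 1 + b * v 2) ^ 2 + v 2 ^ 2 := by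
      simp [dotProduct, mulVec, Fin.sum_univ_three]
      linear_combination (v 2) ^ 2 * h
    by_contra hle
    have hsum : a * (m * v 0 + v 2) ^ 2 + m * (a * v 1 + b * v 2) ^ 2 + v 2 ^ 2 = 0 :=
      le_antisymm (hid ▸ mul_nonpos_of_nonneg_of_nonpos (by positivity) (not_lt.mp hle))
        (by positivity)
    rw [add_eq_zero_iff_of_nonneg (by positivity) (by positivity),
      add_eq_zero_iff_of_nonneg (by positivity) (by positivity)] at hsum
    obtain ⟨⟨h0, h1⟩, h2⟩ := hsum
    simp only [mul_eq_zero, ha.ne', hm.ne', pow_eq_zero_iff two_ne_zero, false_or] at h0 h1 h2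
    simp only [h2, mul_zero, add_zero, ha.ne', hm.ne', mul_eq_zero, false_or] at h0 h1
    exact hv (by ext i; fin_cases i <;> simp [h0, h1, h2])

end Matrix

lemma jacobiSym_neg_eq_one {m p : ℕ} {D : ℤ} (hm : m % 4 = 1) (hp : p % 4 = 1)
    (hmD : m * D = p + 1) : J(-D | p) = 1 := by
  have hpodd : Odd p := Nat.odd_iff.mpr (by omega)
  have hJm : J(m | p) = 1 := by
    rw [jacobiSym.quadratic_reciprocity_one_mod_four hm hpodd,
      jacobiSym.mod_left' (Int.modEq_iff_dvd.mpr ⟨-D, by linear_combination hmD⟩ :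
        (p : ℤ) ≡ -1 [ZMOD m]),
      jacobiSym.at_neg_one (Nat.odd_iff.mpr (by omega)), ZMod.χ₄_nat_one_mod_four hm]
  have hJmD : J(m | p) * J(D | p) = 1 := by
    rw [← jacobiSym.mul_left,
      jacobiSym.mod_left' (Int.modEq_iff_dvd.mpr ⟨-1, by linear_combination -hmD⟩ :
        m * D ≡ 1 [ZMOD p]),
      jacobiSym.one_left]
  rw [neg_eq_neg_one_mul, jacobiSym.mul_left, jacobiSym.at_neg_one hpodd,
    ZMod.χ₄_nat_one_mod_four hp]
  simpa [hJm] using hJmD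

lemma exists_pos_mul_sub_sq_eq_add_one {m : ℕ} (hm : m % 4 = 1) :
    ∃ a b c : ℤ, 0 < a ∧ m * (a * c - b ^ 2) = a + 1 := by
  have : NeZero (4 * m) := ⟨by omega⟩
  have hunit : IsUnit (2 * m - 1 : ZMod (4 * m)) := by
    refine IsUnit.of_mul_eq_one (2 * m - 1) ?_
    linear_combination (m - 1 : ZMod (4 * m)) *
      (by exact_mod_cast ZMod.natCast_self (4 * m) : (4 * m : ZMod (4 * m)) = 0)
  obtain ⟨p, -, hp, hpmod⟩ := Nat.forall_exists_prime_gt_and_eq_mod hunit 0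
  have : Fact p.Prime := ⟨hp⟩
  obtain ⟨k, hk⟩ := (ZMod.intCast_eq_intCast_iff_dvd_sub _ _ _).mp
    (by push_cast; exact hpmod.symm : ((2 * m - 1 : ℤ) : ZMod (4 * m)) = ((p : ℤ) : ZMod (4 * m)))
  push_cast at hk
  have hp4 : p % 4 = 1 := by
    have : (p : ℤ) = 2 * m - 1 + 4 * (m * k) := by linear_combination hk
    generalize m * k = t at this
    omega
  obtain ⟨s, hs⟩ := ZMod.isSquare_of_jacobiSym_eq_one
    (jacobiSym_neg_eq_one (D := 2 + 4 * k) hm hp4 (by linear_combination -hk))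
  obtain ⟨b, rfl⟩ := ZMod.intCast_surjective s
  obtain ⟨c, hc⟩ := (ZMod.intCast_zmod_eq_zero_iff_dvd (b ^ 2 + (2 + 4 * k)) p).mp
    (by push_cast at hs ⊢; rw [sq, ← hs]; ring)
  exact ⟨p, b, c, by exact_mod_cast hp.pos, by linear_combination -(m : ℤ) * hc - hk⟩

theorem exists_isPrimitiveVector_sq_add_sq_add_sq {m : ℕ} (hm : m % 4 = 1) :
    ∃ v : Fin 3 → ℤ, IsPrimitiveVector v ∧ (m : ℤ) = v 0 ^ 2 + v 1 ^ 2 + v 2 ^ 2 := by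
  obtain ⟨a, b, c, ha, h⟩ := exists_pos_mul_sub_sq_eq_add_one hm
  obtain ⟨V, hV, hAV⟩ :=
    (posDef_of_mul_sub_sq_eq (by omega) ha h).exists_eq_transpose_mul_self_fin_three
      (by simp [det_fin_three]; linear_combination h)
  refine ⟨fun i => V i 0, isPrimitiveVector_col_of_det_eq_one hV 0, ?_⟩
  simpa [mul_apply, Fin.sum_univ_three, sq] using congrFun (congrFun hAV 0) 0

lemma Int.sq_emod_four_of_even {x : ℤ} (hx : Even x) : x ^ 2 % 4 = 0 := by
  obtain ⟨k, rfl⟩ := hx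
  rw [show (k + k) ^ 2 = 4 * k ^ 2 by ring, Int.mul_emod_right]

lemma Int.even_even_odd_of_sq_add_sq_add_sq_emod_four {x y z : ℤ}
    (h : (x ^ 2 + y ^ 2 + z ^ 2) % 4 = 1) :
    (Even x ∧ Even y ∧ Odd z) ∨ (Even x ∧ Odd y ∧ Even z) ∨ (Odd x ∧ Even y ∧ Even z) := by
  have hsq (w : ℤ) : Even w ∧ w ^ 2 % 4 = 0 ∨ Odd w ∧ w ^ 2 % 4 = 1 :=
    (Int.even_or_odd w).imp (fun hw => ⟨hw, sq_emod_four_of_even hw⟩)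
      (fun hw => ⟨hw, sq_mod_four_eq_one_of_odd hw⟩)
  rw [Int.add_emod, Int.add_emod (x ^ 2)] at h
  rcases hsq x with ⟨hx, hx4⟩ | ⟨hx, hx4⟩ <;> rcases hsq y with ⟨hy, hy4⟩ | ⟨hy, hy4⟩ <;>
    rcases hsq z with ⟨hz, hz4⟩ | ⟨hz, hz4⟩ <;> norm_num [hx4, hy4, hz4] at h <;> tauto

lemma Int.exists_nat_mul_succ_eq (y : ℤ) : ∃ Y : ℕ, y * (y + 1) = Y * (Y + 1) := by
  rcases le_or_gt 0 y with hy | hy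
  · exact ⟨y.toNat, by rw [Int.toNat_of_nonneg hy]⟩
  · exact ⟨(-y - 1).toNat, by rw [Int.toNat_of_nonneg (by omega)]; ring⟩

lemma exists_sq_add_triangle_add_triangle {n : ℕ} {s t u : ℤ}
    (h : 4 * (n : ℤ) + 1 = s ^ 2 + t ^ 2 + u ^ 2) (hs : Even s) (hs0 : s ≠ 0)
    (htu : Odd (t + u)) :
    ∃ x y z : ℕ, 1 ≤ x ∧ n = x ^ 2 + y * (y + 1) / 2 + z * (z + 1) / 2 := by
  obtain ⟨x, rfl⟩ := hs
  obtain ⟨y, hy⟩ := htu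
  obtain ⟨Y, hY⟩ := Int.exists_nat_mul_succ_eq y
  obtain ⟨Z, hZ⟩ := Int.exists_nat_mul_succ_eq (y - u)
  have h2n : 2 * (n : ℤ) = 2 * x.natAbs ^ 2 + Y * (Y + 1) + Z * (Z + 1) := by
    rw [Int.natAbs_sq, ← hY, ← hZ]
    obtain rfl : t = 2 * y + 1 - u := by linarith
    linarith
  refine ⟨x.natAbs, Y, Z, Int.natAbs_pos.mpr (by rintro rfl; simp at hs0), ?_⟩
  have h2n' : 2 * n = 2 * x.natAbs ^ 2 + Y * (Y + 1) + Z * (Z + 1) := by exact_mod_cast h2n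
  have hY2 := Nat.div_two_mul_two_of_even (Nat.even_mul_succ_self Y)
  have hZ2 := Nat.div_two_mul_two_of_even (Nat.even_mul_succ_self Z)
  omega

lemma exists_sq_add_triangle_add_triangle_of_even_even_odd {n : ℕ} (hn : 0 < n) {e e' o : ℤ}
    (h : 4 * (n : ℤ) + 1 = e ^ 2 + e' ^ 2 + o ^ 2) (he : Even e) (he' : Even e') (ho : Odd o)
    (hunit : e = 0 → e' = 0 → IsUnit o) :
    ∃ x y z : ℕ, 1 ≤ x ∧ n = x ^ 2 + y * (y + 1) / 2 + z * (z + 1) / 2 := by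
  by_cases he0 : e = 0
  · have he'0 : e' ≠ 0 := fun he'0 => by
      have := Int.isUnit_sq (hunit he0 he'0)
      subst he0 he'0
      omega
    exact exists_sq_add_triangle_add_triangle (by linear_combination h) he' he'0 (he.add_odd ho)
  · exact exists_sq_add_triangle_add_triangle h he he0 (he'.add_odd ho)

theorem stmt_12 : ∀ n : ℕ, 0 < n → ∃ x y z : ℕ, 1 ≤ x ∧
    n = x ^ 2 + y * (y + 1) / 2 + z * (z + 1) / 2 := by
  intro n hn
  obtain ⟨v, hv, hsum⟩ := exists_isPrimitiveVector_sq_add_sq_add_sq (m := 4 * n + 1) (by omega)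
  push_cast at hsum
  rcases Int.even_even_odd_of_sq_add_sq_add_sq_emod_four (x := v 0) (y := v 1) (z := v 2)
    (by omega) with ⟨h0, h1, h2⟩ | ⟨h0, h1, h2⟩ | ⟨h0, h1, h2⟩
  · exact exists_sq_add_triangle_add_triangle_of_even_even_odd hn hsum h0 h1 h2
      fun e0 e1 => hv _ fun i => by fin_cases i <;> simp [e0, e1]
  · exact exists_sq_add_triangle_add_triangle_of_even_even_odd hn (by linear_combination hsum)
      h0 h2 h1 fun e0 e2 => hv _ fun i => by fin_cases i <;> simp [e0, e2]
  · exact exists_sq_add_triangle_add_triangle_of_even_even_odd hn (by linear_combination hsum)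
      h1 h2 h0 fun e1 e2 => hv _ fun i => by fin_cases i <;> simp [e1, e2]
end
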